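/- arXiv:1510.01165 — 10 statements merged into one kernel-verified Lean document; each statement's English description precedes it below -/
import Mathlib

section
/- If u and v are false twins in a graph G (i.e., N(u) = N(v)), then u and v belong to exactly the same bicliques of G, except possibly bicliques containing the edge between them (but since N(u)=N(v), u and v are non-adjacent, so they belong to exactly the same bicliques). Consequently, deleting one vertex of a false-twin pair does not change the number of bicliques of G. -/
/-- A set of vertices inducing a complete bipartite subgraph (both sides nonempty). -/
def IsCompleteBipartiteSet {V : Type*} (G : SimpleGraph V) (B : Set V) : Prop :=
  ∃ X Y : Set V, X.Nonempty ∧ Y.Nonempty ∧ Disjoint X Y ∧ B = X ∪ Y ∧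
    (∀ x ∈ X, ∀ y ∈ Y, G.Adj x y) ∧
    (∀ x ∈ X, ∀ x' ∈ X, ¬ G.Adj x x') ∧
    (∀ y ∈ Y, ∀ y' ∈ Y, ¬ G.Adj y y')

/-- A biclique: a maximal set of vertices inducing a complete bipartite subgraph. -/
def IsBiclique {V : Type*} (G : SimpleGraph V) (B : Set V) : Prop :=
  IsCompleteBipartiteSet G B ∧
    ∀ B' : Set V, IsCompleteBipartiteSet G B' → B ⊆ B' → B' = B

/-- A vertex set that is a star: a center `c` adjacent to all other vertices of the set,
which are nonempty and pairwise non-adjacent (shape `K_{1,r}`, `r ≥ 1`). -/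
def IsStarSet {V : Type*} (G : SimpleGraph V) (B : Set V) : Prop :=
  ∃ c ∈ B, (B \ {c}).Nonempty ∧ (∀ w ∈ B, w ≠ c → G.Adj c w) ∧
    (∀ w ∈ B, ∀ z ∈ B, w ≠ c → z ≠ c → ¬ G.Adj w z)

/-- A graph is false-twin-free if no two distinct vertices have equal open neighborhoods. -/
def FalseTwinFree {V : Type*} (G : SimpleGraph V) : Prop :=
  ∀ u v : V, G.neighborSet u = G.neighborSet v → u = v

namespace FTaux

variable {V : Type*} {G : SimpleGraph V}

lemma adj_iff_of_nbr_eq {u v : V} (h : G.neighborSet u = G.neighborSet v) :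
    ∀ w, G.Adj u w ↔ G.Adj v w := by
  intro w
  have := Set.ext_iff.mp h w
  simpa [SimpleGraph.mem_neighborSet] using this

lemma cbs_insert_aux {a b : V} (hab : ∀ w, G.Adj a w ↔ G.Adj b w)
    {X Y : Set V} (hY : Y.Nonempty) (hd : Disjoint X Y)
    (hadj : ∀ x ∈ X, ∀ y ∈ Y, G.Adj x y)
    (hXX : ∀ x ∈ X, ∀ x' ∈ X, ¬ G.Adj x x')
    (hYY : ∀ y ∈ Y, ∀ y' ∈ Y, ¬ G.Adj y y')
    (hb : b ∈ X) :
    IsCompleteBipartiteSet G (insert a (X ∪ Y)) := by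
  have hnab : ¬ G.Adj a b := by rw [hab b]; exact G.irrefl
  have haY : a ∉ Y := fun haY => hnab ((hadj b hb a haY).symm)
  refine ⟨insert a X, Y, ⟨a, Set.mem_insert _ _⟩, hY, ?_, ?_, ?_, ?_, hYY⟩
  · rw [Set.disjoint_left]
    rintro x (rfl | hx) hxY
    · exact haY hxY
    · exact Set.disjoint_left.mp hd hx hxY
  · rw [Set.insert_union]
  · rintro x (rfl | hx) y hy
    · exact (hab y).mpr (hadj b hb y hy)
    · exact hadj x hx y hy
  · rintro x (rfl | hx) x' (rfl | hx')
    · exact G.irrefl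
    · rw [hab x']; exact hXX b hb x' hx'
    · intro H
      exact hXX b hb x hx ((hab x).mp H.symm)
    · exact hXX x hx x' hx'

lemma cbs_insert {a b : V} (hab : ∀ w, G.Adj a w ↔ G.Adj b w)
    {B : Set V} (hb : b ∈ B) (hB : IsCompleteBipartiteSet G B) :
    IsCompleteBipartiteSet G (insert a B) := by
  obtain ⟨X, Y, hX, hY, hd, rfl, hadj, hXX, hYY⟩ := hB
  rcases hb with hbX | hbY
  · exact cbs_insert_aux hab hY hd hadj hXX hYY hbX
  · have := cbs_insert_aux hab hX hd.symm
      (fun y hy x hx => (hadj x hx y hy).symm) hYY hXX hbY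
    rwa [Set.union_comm] at this

lemma cbs_erase_aux {a b : V} (hne : a ≠ b)
    {X Y : Set V} (hY : Y.Nonempty) (hd : Disjoint X Y)
    (hadj : ∀ x ∈ X, ∀ y ∈ Y, G.Adj x y)
    (hXX : ∀ x ∈ X, ∀ x' ∈ X, ¬ G.Adj x x')
    (hYY : ∀ y ∈ Y, ∀ y' ∈ Y, ¬ G.Adj y y')
    (ha : a ∈ X) (hb : b ∈ X) :
    IsCompleteBipartiteSet G ((X ∪ Y) \ {a}) := by
  have haY : a ∉ Y := fun h' => Set.disjoint_left.mp hd ha h'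
  refine ⟨X \ {a}, Y, ⟨b, hb, hne.symm⟩, hY, ?_, ?_, ?_, ?_, hYY⟩
  · exact hd.mono_left Set.diff_subset
  · rw [Set.union_diff_distrib, Set.diff_singleton_eq_self haY]
  · exact fun x hx y hy => hadj x hx.1 y hy
  · exact fun x hx x' hx' => hXX x hx.1 x' hx'.1

lemma cbs_erase {a b : V} (hab : ∀ w, G.Adj a w ↔ G.Adj b w) (hne : a ≠ b)
    {B : Set V} (ha : a ∈ B) (hb : b ∈ B) (hB : IsCompleteBipartiteSet G B) :
    IsCompleteBipartiteSet G (B \ {a}) := by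
  have hnab : ¬ G.Adj a b := by rw [hab b]; exact G.irrefl
  obtain ⟨X, Y, hX, hY, hd, rfl, hadj, hXX, hYY⟩ := hB
  rcases ha with haX | haY <;> rcases hb with hbX | hbY
  · exact cbs_erase_aux hne hY hd hadj hXX hYY haX hbX
  · exact absurd (hadj a haX b hbY) hnab
  · exact absurd (hadj b hbX a haY).symm hnab
  · have := cbs_erase_aux hne hX hd.symm
      (fun y hy x hx => (hadj x hx y hy).symm) hYY hXX haY hbY
    rwa [Set.union_comm] at this

lemma cbs_induce {s : Set V} {C : Set s} :
    IsCompleteBipartiteSet (G.induce s) C ↔ IsCompleteBipartiteSet G (Subtype.val '' C) := by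
  constructor
  · rintro ⟨X, Y, hX, hY, hd, rfl, hadj, hXX, hYY⟩
    refine ⟨Subtype.val '' X, Subtype.val '' Y, hX.image _, hY.image _,
      Set.disjoint_image_of_injective Subtype.val_injective hd, Set.image_union _ _ _, ?_, ?_, ?_⟩
    · rintro _ ⟨x, hx, rfl⟩ _ ⟨y, hy, rfl⟩
      exact hadj x hx y hy
    · rintro _ ⟨x, hx, rfl⟩ _ ⟨x', hx', rfl⟩
      exact hXX x hx x' hx'
    · rintro _ ⟨y, hy, rfl⟩ _ ⟨y', hy', rfl⟩
      exact hYY y hy y' hy'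
  · rintro ⟨X, Y, hX, hY, hd, hU, hadj, hXX, hYY⟩
    have hXs : X ⊆ s := by
      intro x hx
      have : x ∈ Subtype.val '' C := hU ▸ Set.mem_union_left _ hx
      obtain ⟨c, _, rfl⟩ := this; exact c.2
    have hYs : Y ⊆ s := by
      intro y hy
      have : y ∈ Subtype.val '' C := hU ▸ Set.mem_union_right _ hy
      obtain ⟨c, _, rfl⟩ := this; exact c.2
    refine ⟨Subtype.val ⁻¹' X, Subtype.val ⁻¹' Y, ?_, ?_, hd.preimage _, ?_, ?_, ?_, ?_⟩
    · obtain ⟨x, hx⟩ := hX; exact ⟨⟨x, hXs hx⟩, hx⟩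
    · obtain ⟨y, hy⟩ := hY; exact ⟨⟨y, hYs hy⟩, hy⟩
    · have : C = Subtype.val ⁻¹' (Subtype.val '' C) :=
        (Set.preimage_image_eq C Subtype.val_injective).symm
      rw [this, hU, Set.preimage_union]
    · intro x hx y hy; exact hadj x hx y hy
    · intro x hx x' hx'; exact hXX x hx x' hx'
    · intro y hy y' hy'; exact hYY y hy y' hy'

lemma mem_of_twin {u v : V} (h : G.neighborSet u = G.neighborSet v)
    {B : Set V} (hB : IsBiclique G B) (hu : u ∈ B) : v ∈ B := by
  have hab : ∀ w, G.Adj v w ↔ G.Adj u w := fun w => (adj_iff_of_nbr_eq h w).symm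
  have hcb := cbs_insert hab hu hB.1
  have := hB.2 _ hcb (Set.subset_insert _ _)
  rw [← this]; exact Set.mem_insert _ _

end FTaux

open FTaux
/-- False twins belong to exactly the same bicliques, and deleting one of them
does not change the number of bicliques. -/
theorem false_twins_same_bicliques {V : Type*} [Fintype V] (G : SimpleGraph V)
    (u v : V) (huv : u ≠ v) (h : G.neighborSet u = G.neighborSet v) :
    (∀ B : Set V, IsBiclique G B → (u ∈ B ↔ v ∈ B)) ∧
    {B : Set ({u}ᶜ : Set V) | IsBiclique (G.induce ({u}ᶜ : Set V)) B}.ncard =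
      {B : Set V | IsBiclique G B}.ncard := by
  have hab : ∀ w, G.Adj u w ↔ G.Adj v w := adj_iff_of_nbr_eq h
  have part1 : ∀ B : Set V, IsBiclique G B → (u ∈ B ↔ v ∈ B) :=
    fun B hB => ⟨mem_of_twin h hB, mem_of_twin h.symm hB⟩
  refine ⟨part1, ?_⟩
  have himage : ∀ B : Set V,
      Subtype.val '' (Subtype.val ⁻¹' B : Set ({u}ᶜ : Set V)) = B \ {u} := by
    intro B
    rw [Set.image_preimage_eq_inter_range, Subtype.range_coe, ← Set.diff_eq]
  have hvne : v ∈ ({u}ᶜ : Set V) := by simpa using Ne.symm huv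
  -- maps to
  have hmaps : ∀ B : Set V, IsBiclique G B → IsBiclique (G.induce ({u}ᶜ : Set V)) (Subtype.val ⁻¹' B : Set ({u}ᶜ : Set V)) := by
    intro B hB
    by_cases hu : u ∈ B
    · have hv : v ∈ B := (part1 B hB).1 hu
      constructor
      · rw [cbs_induce, himage B]
        exact cbs_erase hab huv hu hv hB.1
      · intro C' hC' hsub
        have hS' : IsCompleteBipartiteSet G (Subtype.val '' C') := (cbs_induce).mp hC'
        have hvfB : (⟨v, hvne⟩ : ({u}ᶜ : Set V)) ∈ (Subtype.val ⁻¹' B : Set ({u}ᶜ : Set V)) := hv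
        have hvS' : v ∈ Subtype.val '' C' := ⟨⟨v, hvne⟩, hsub hvfB, rfl⟩
        have huS' : u ∉ Subtype.val '' C' := by
          rintro ⟨c, _, hc⟩; exact c.2 (by simp [hc])
        have hins : IsCompleteBipartiteSet G (insert u (Subtype.val '' C')) :=
          cbs_insert hab hvS' hS'
        have hBsub : B ⊆ insert u (Subtype.val '' C') := by
          intro x hx
          by_cases hxu : x = u
          · rw [hxu]; exact Set.mem_insert _ _
          · refine Set.mem_insert_of_mem _ ?_
            have hxm : (⟨x, by simpa using hxu⟩ : ({u}ᶜ : Set V)) ∈ (Subtype.val ⁻¹' B : Set ({u}ᶜ : Set V)) := hx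
            exact ⟨_, hsub hxm, rfl⟩
        have heq := hB.2 _ hins hBsub
        have hS'eq : Subtype.val '' C' = B \ {u} := by
          rw [← heq, Set.insert_diff_self_of_notMem huS']
        apply Set.image_injective.mpr Subtype.val_injective
        rw [hS'eq, himage B]
    · constructor
      · rw [cbs_induce, himage B, Set.diff_singleton_eq_self hu]; exact hB.1
      · intro C' hC' hsub
        have hS' := (cbs_induce).mp hC'
        have hBsub : B ⊆ Subtype.val '' C' := by
          intro x hx
          have hxu : x ≠ u := fun e => hu (e ▸ hx)
          have hxm : (⟨x, by simpa using hxu⟩ : ({u}ᶜ : Set V)) ∈ (Subtype.val ⁻¹' B : Set ({u}ᶜ : Set V)) := hx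
          exact ⟨_, hsub hxm, rfl⟩
        have heq := hB.2 _ hS' hBsub
        apply Set.image_injective.mpr Subtype.val_injective
        rw [heq, himage B, Set.diff_singleton_eq_self hu]
  -- injectivity
  have hinj : Set.InjOn (fun B : Set V => (Subtype.val ⁻¹' B : Set ({u}ᶜ : Set V))) {B | IsBiclique G B} := by
    intro B hB B' hB' hfe
    have hfe' : (Subtype.val ⁻¹' B : Set ({u}ᶜ : Set V)) = Subtype.val ⁻¹' B' := hfe
    have hd : B \ {u} = B' \ {u} := by rw [← himage B, ← himage B', hfe']
    have key : ∀ x, x ≠ u → (x ∈ B ↔ x ∈ B') := by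
      intro x hx
      constructor <;> intro hm
      · have hmm : x ∈ B' \ {u} := hd ▸ (⟨hm, hx⟩ : x ∈ B \ {u})
        exact hmm.1
      · have hmm : x ∈ B \ {u} := hd.symm ▸ (⟨hm, hx⟩ : x ∈ B' \ {u})
        exact hmm.1
    ext x
    by_cases hx : x = u
    · subst hx
      rw [part1 B hB, part1 B' hB']
      exact key v (Ne.symm huv)
    · exact key x hx
  -- surjectivity
  have hsurj : ∀ C : Set ({u}ᶜ : Set V), IsBiclique (G.induce ({u}ᶜ : Set V)) C →
      ∃ B, IsBiclique G B ∧ (Subtype.val ⁻¹' B : Set ({u}ᶜ : Set V)) = C := by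
    intro C hC
    have hS : IsCompleteBipartiteSet G (Subtype.val '' C) := (cbs_induce).mp hC.1
    have huS : u ∉ Subtype.val '' C := by
      rintro ⟨c, _, hc⟩; exact c.2 (by simp [hc])
    by_cases hvS : v ∈ Subtype.val '' C
    · refine ⟨insert u (Subtype.val '' C), ⟨cbs_insert hab hvS hS, ?_⟩, ?_⟩
      · intro B' hB' hsub
        have huB' : u ∈ B' := hsub (Set.mem_insert _ _)
        have hvB' : v ∈ B' := hsub (Set.mem_insert_of_mem _ hvS)
        have herase := cbs_erase hab huv huB' hvB' hB'
        have heq2 : Subtype.val '' (Subtype.val ⁻¹' (B' \ {u}) : Set ({u}ᶜ : Set V))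
            = B' \ {u} := by
          rw [himage, Set.diff_diff, Set.union_self]
        have hCB : IsCompleteBipartiteSet (G.induce ({u}ᶜ : Set V))
            (Subtype.val ⁻¹' (B' \ {u})) := by
          rw [cbs_induce, heq2]
          exact herase
        have hsubC : C ⊆ Subtype.val ⁻¹' (B' \ {u}) := by
          intro c hc
          exact ⟨hsub (Set.mem_insert_of_mem _ ⟨c, hc, rfl⟩), c.2⟩
        have hCeq := hC.2 _ hCB hsubC
        have hBeq : B' \ {u} = Subtype.val '' C := by
          rw [← heq2, hCeq]
        ext x
        constructor
        · intro hx
          by_cases hxu : x = u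
          · rw [hxu]; exact Set.mem_insert _ _
          · refine Set.mem_insert_of_mem _ ?_
            rw [← hBeq]; exact ⟨hx, hxu⟩
        · exact fun hx => hsub hx
      · apply Set.image_injective.mpr Subtype.val_injective
        rw [himage, Set.insert_diff_self_of_notMem huS]
    · refine ⟨Subtype.val '' C, ⟨hS, ?_⟩, ?_⟩
      · intro B' hB' hsub
        by_cases huB' : u ∈ B'
        · exfalso
          have hT : IsCompleteBipartiteSet G ((insert v B') \ {u}) :=
            cbs_erase hab huv (Set.mem_insert_of_mem _ huB') (Set.mem_insert _ _)
              (cbs_insert (fun w => (hab w).symm) huB' hB')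
          have hTi : IsCompleteBipartiteSet (G.induce ({u}ᶜ : Set V))
              (Subtype.val ⁻¹' ((insert v B') \ {u})) := by
            rw [cbs_induce]
            have heq2 : Subtype.val '' (Subtype.val ⁻¹' ((insert v B') \ {u}) :
                Set ({u}ᶜ : Set V)) = (insert v B') \ {u} := by
              rw [himage, Set.diff_diff, Set.union_self]
            rw [heq2]
            exact hT
          have hsubC : C ⊆ Subtype.val ⁻¹' ((insert v B') \ {u}) := by
            intro c hc
            exact ⟨Set.mem_insert_of_mem _ (hsub ⟨c, hc, rfl⟩), c.2⟩
          have hCeq := hC.2 _ hTi hsubC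
          apply hvS
          have hvT : v ∈ (insert v B') \ {u} :=
            ⟨Set.mem_insert _ _, fun e => huv (Set.mem_singleton_iff.mp e).symm⟩
          have hvmem : (⟨v, hvne⟩ : ({u}ᶜ : Set V)) ∈ C := by
            rw [← hCeq]; exact hvT
          exact ⟨_, hvmem, rfl⟩
        · have hBi : IsCompleteBipartiteSet (G.induce ({u}ᶜ : Set V)) (Subtype.val ⁻¹' B') := by
            rw [cbs_induce]
            rw [himage, Set.diff_singleton_eq_self huB']
            exact hB'
          have hsubC : C ⊆ Subtype.val ⁻¹' B' := fun c hc => hsub ⟨c, hc, rfl⟩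
          have hCeq := hC.2 _ hBi hsubC
          have himg := congrArg (Set.image (Subtype.val : ({u}ᶜ : Set V) → V)) hCeq
          rw [himage, Set.diff_singleton_eq_self huB'] at himg
          exact himg
      · exact Set.preimage_image_eq C Subtype.val_injective
  have himg : (fun B : Set V => (Subtype.val ⁻¹' B : Set ({u}ᶜ : Set V))) '' {B | IsBiclique G B} =
      {C : Set ({u}ᶜ : Set V) | IsBiclique (G.induce ({u}ᶜ : Set V)) C} := by
    apply Set.Subset.antisymm
    · rintro _ ⟨B, hB, rfl⟩
      exact hmaps B hB
    · rintro C hC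
      exact hsurj C hC
  rw [← himg, Set.ncard_image_of_injOn hinj]
end

section
/- A false-twin-free graph on n ≥ 3 vertices has at most ⌊n/2⌋ vertices of degree one. -/
/-- A connected false-twin-free graph on n ≥ 3 vertices has at most ⌊n/2⌋
vertices of degree one. -/
theorem degree_one_bound {V : Type*} [Fintype V] (G : SimpleGraph V) [DecidableRel G.Adj]
    (hconn : G.Connected) (hn : 3 ≤ Fintype.card V) (htf : FalseTwinFree G) :
    {v : V | G.degree v = 1}.ncard ≤ Fintype.card V / 2 := by
  classical
  set S : Finset V := Finset.univ.filter (fun v => G.degree v = 1) with hS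
  -- choose the unique neighbor of each degree-one vertex
  have hex : ∀ v : V, ∃ u, G.degree v = 1 → G.neighborFinset v = {u} := by
    intro v
    by_cases h : G.degree v = 1
    · obtain ⟨a, ha⟩ := Finset.card_eq_one.mp h
      exact ⟨a, fun _ => ha⟩
    · exact ⟨v, fun h' => absurd h' h⟩
  choose f hf using hex
  have hadj : ∀ v, G.degree v = 1 → G.Adj v (f v) := by
    intro v hv
    have : f v ∈ G.neighborFinset v := by rw [hf v hv]; simp
    simpa [SimpleGraph.mem_neighborFinset] using this
  have huniq : ∀ v, G.degree v = 1 → ∀ x, G.Adj v x → x = f v := by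
    intro v hv x hx
    have : x ∈ G.neighborFinset v := by simpa [SimpleGraph.mem_neighborFinset] using hx
    rw [hf v hv] at this
    simpa using this
  -- f v is not a leaf
  have hnotleaf : ∀ v, G.degree v = 1 → G.degree (f v) ≠ 1 := by
    intro v hv hu
    set u := f v with hu'
    have huv : f u = v := (huniq u hu v (hadj v hv).symm).symm
    have key : ∀ a x, G.Walk a x → (a = v ∨ a = u) → (x = v ∨ x = u) := by
      intro a x p
      induction p with
      | nil => exact id
      | @cons a b x h p ih =>
        intro hab
        apply ih
        rcases hab with rfl | hab2
        · right; exact huniq a hv b h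
        · left; rw [← huv]; exact huniq u hu b (hab2 ▸ h)
    have h2 : ({v, u} : Finset V).card < Fintype.card V := by
      have : ({v, u} : Finset V).card ≤ 2 := by
        apply le_trans (Finset.card_insert_le _ _); simp
      omega
    have hnsub : ¬ (Finset.univ ⊆ ({v, u} : Finset V)) := fun hsub => by
      have := Finset.card_le_card hsub
      simp [Finset.card_univ] at this
      omega
    obtain ⟨w, -, hw⟩ := Finset.not_subset.mp hnsub
    obtain ⟨p⟩ := hconn.preconnected v w
    rcases key v w p (Or.inl rfl) with rfl | rfl <;> simp at hw
  -- f is injective on S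
  have hinj : ∀ v₁ ∈ S, ∀ v₂ ∈ S, f v₁ = f v₂ → v₁ = v₂ := by
    intro v₁ h₁ v₂ h₂ hff
    simp only [hS, Finset.mem_filter] at h₁ h₂
    apply htf
    have e₁ : G.neighborFinset v₁ = {f v₁} := hf v₁ h₁.2
    have e₂ : G.neighborFinset v₂ = {f v₂} := hf v₂ h₂.2
    have : G.neighborFinset v₁ = G.neighborFinset v₂ := by rw [e₁, e₂, hff]
    rwa [SimpleGraph.neighborFinset_def, SimpleGraph.neighborFinset_def,
      Set.toFinset_inj] at this
  have hmaps : ∀ v ∈ S, f v ∈ Sᶜ := by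
    intro v hv
    simp only [hS, Finset.mem_filter] at hv
    simp only [Finset.mem_compl, hS, Finset.mem_filter]
    exact fun h => hnotleaf v hv.2 h.2
  have hcard : S.card ≤ Sᶜ.card := Finset.card_le_card_of_injOn f hmaps hinj
  have htotal : S.card + Sᶜ.card = Fintype.card V := by
    have := Finset.card_add_card_compl S ; simpa [Finset.card_univ] using this
  have hncard : {v : V | G.degree v = 1}.ncard = S.card := by
    rw [Set.ncard_eq_toFinset_card']
    congr 1
    ext v
    simp [hS]
  rw [hncard]
  omega
end

section
/- In a {K₃, false-twin}-free graph G, every vertex v is contained in some biclique that is a star, i.e., a biclique whose induced subgraph is isomorphic to K_{1,r} for some r ≥ 1. -/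
/-!
Pick a neighbour `u` of `v` and, among the finitely many neighbourhoods containing `N(u)`, a
maximal one `N(c)`. Then `v ∈ N(c)`, and the star `{c} ∪ N(c)` is a biclique: `N(c)` is
independent because `G` is triangle-free, and a complete bipartite set containing the star
with `c` on one side has the other side equal to `N(c)`, so every vertex `x` on the side of `c`
satisfies `N(c) ⊆ N(x)`, which by maximality and false-twin-freeness forces `x = c`.
-/

namespace SimpleGraph

variable {V : Type*} {G : SimpleGraph V}

def IsNeighborSetMaximal (G : SimpleGraph V) (c : V) : Prop :=
  ∀ x, G.neighborSet c ⊆ G.neighborSet x → x = c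

theorem exists_neighborSet_subset_isNeighborSetMaximal [Finite V] (htf : FalseTwinFree G)
    (u : V) : ∃ c, G.neighborSet u ⊆ G.neighborSet c ∧ G.IsNeighborSetMaximal c := by
  obtain ⟨_, hle, ⟨c, rfl⟩, hmax⟩ :=
    (Set.finite_range G.neighborSet).exists_le_maximal (Set.mem_range_self u)
  exact ⟨c, hle, fun x hcx => htf x c (le_antisymm (hmax (Set.mem_range_self x) hcx) hcx)⟩

theorem isStarSet_insert_neighborSet (hK3 : G.CliqueFree 3) {c : V}
    (hne : (G.neighborSet c).Nonempty) : IsStarSet G (insert c (G.neighborSet c)) := by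
  have hind := isIndepSet_neighborSet_of_triangleFree G hK3 c
  refine ⟨c, Set.mem_insert c _, ?_, ?_, ?_⟩
  · rwa [Set.insert_sdiff_self_of_notMem G.notMem_neighborSet_self]
  · exact fun w hw hwc => hw.resolve_left hwc
  · exact fun w hw z hz hwc hzc hwz => hind (hw.resolve_left hwc) (hz.resolve_left hzc) hwz.ne hwz

theorem isCompleteBipartiteSet_insert_neighborSet (hK3 : G.CliqueFree 3) {c : V}
    (hne : (G.neighborSet c).Nonempty) :
    IsCompleteBipartiteSet G (insert c (G.neighborSet c)) := by
  refine ⟨{c}, G.neighborSet c, Set.singleton_nonempty c, hne, ?_, Set.insert_eq c _, ?_, ?_,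
    fun y hy y' hy' hyy' =>
      isIndepSet_neighborSet_of_triangleFree G hK3 c hy hy' hyy'.ne hyy'⟩
  · exact Set.disjoint_singleton_left.mpr G.notMem_neighborSet_self
  · rintro x rfl y hy
    exact hy
  · rintro x rfl x' rfl
    exact G.irrefl

theorem union_subset_insert_neighborSet {c : V} (hc : G.IsNeighborSetMaximal c) {X Y : Set V}
    (hXY : ∀ x ∈ X, ∀ y ∈ Y, G.Adj x y) (hX : ∀ x ∈ X, ∀ x' ∈ X, ¬ G.Adj x x')
    (hsub : G.neighborSet c ⊆ X ∪ Y) (hcX : c ∈ X) :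
    X ∪ Y ⊆ insert c (G.neighborSet c) := by
  have hNY : G.neighborSet c ⊆ Y := fun z hz =>
    (hsub hz).resolve_left fun hzX => hX c hcX z hzX hz
  rintro a (haX | haY)
  · exact Or.inl (hc a fun z hz => hXY a haX z (hNY hz))
  · exact Or.inr (hXY c hcX a haY)

theorem isBiclique_insert_neighborSet (hK3 : G.CliqueFree 3) {c : V}
    (hne : (G.neighborSet c).Nonempty) (hc : G.IsNeighborSetMaximal c) :
    IsBiclique G (insert c (G.neighborSet c)) := by
  refine ⟨isCompleteBipartiteSet_insert_neighborSet hK3 hne, ?_⟩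
  rintro _ ⟨X, Y, -, -, -, rfl, hXY, hX, hY⟩ hsub
  refine Set.Subset.antisymm ?_ hsub
  have hN : G.neighborSet c ⊆ X ∪ Y := (Set.subset_insert c _).trans hsub
  rcases hsub (Set.mem_insert c _) with hcX | hcY
  · exact union_subset_insert_neighborSet hc hXY hX hN hcX
  · rw [Set.union_comm] at hN ⊢
    exact union_subset_insert_neighborSet hc (fun y hy x hx => (hXY x hx y hy).symm) hY hN hcY

end SimpleGraph

/-- In a connected {K₃, false-twin}-free graph, every vertex is contained in some
star biclique. -/
theorem mem_star_biclique {V : Type*} [Fintype V] (G : SimpleGraph V)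
    (hconn : G.Connected) (hn : 2 ≤ Fintype.card V)
    (hK3 : G.CliqueFree 3) (htf : FalseTwinFree G) :
    ∀ v : V, ∃ B : Set V, v ∈ B ∧ IsBiclique G B ∧ IsStarSet G B := by
  intro v
  have : Nontrivial V := Fintype.one_lt_card_iff_nontrivial.mp hn
  obtain ⟨u, hvu⟩ := hconn.preconnected.exists_adj_of_nontrivial v
  obtain ⟨c, huc, hc⟩ := SimpleGraph.exists_neighborSet_subset_isNeighborSetMaximal htf u
  have hvc : v ∈ G.neighborSet c := huc hvu.symm
  exact ⟨insert c (G.neighborSet c), Set.mem_insert_of_mem c hvc,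
    SimpleGraph.isBiclique_insert_neighborSet hK3 ⟨v, hvc⟩ hc,
    SimpleGraph.isStarSet_insert_neighborSet hK3 ⟨v, hvc⟩⟩
end

section
/- Let G be a {K₃, false-twin}-free graph and let v be a vertex of degree k. Then v belongs to at least k distinct bicliques of G. -/
/-- In a {K₃, false-twin}-free graph, a vertex of degree k belongs to at least
k distinct bicliques. -/
theorem degree_le_bicliques {V : Type*} [Fintype V] (G : SimpleGraph V)
    [DecidableRel G.Adj] (hK3 : G.CliqueFree 3) (htf : FalseTwinFree G)
    (v : V) (k : ℕ) (hdeg : G.degree v = k) :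
    k ≤ {B : Set V | IsBiclique G B ∧ v ∈ B}.ncard := by
  classical
  have tri : ∀ a b c : V, G.Adj a b → G.Adj a c → ¬ G.Adj b c := fun a b c hab hac hbc =>
    hK3 {a, b, c} (SimpleGraph.is3Clique_triple_iff.mpr ⟨hab, hac, hbc⟩)
  set Yp : V → Set V := fun u => {y | ∀ w, G.Adj u w → G.Adj w y} with hYp
  set Bs : V → Set V := fun u => G.neighborSet u ∪ Yp u with hBs
  have huYp : ∀ u : V, u ∈ Yp u := fun u w hw => hw.symm
  have hvB : ∀ u, G.Adj v u → v ∈ Bs u := fun u hu => Set.mem_union_left _ hu.symm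
  -- B(u) is a complete bipartite set
  have hcbs : ∀ u, G.Adj v u → IsCompleteBipartiteSet G (Bs u) := by
    intro u hu
    refine ⟨G.neighborSet u, Yp u, ⟨v, hu.symm⟩, ⟨u, huYp u⟩, ?_, rfl, ?_, ?_, ?_⟩
    · rw [Set.disjoint_left]
      intro x hx hx'
      exact G.irrefl (hx' x hx)
    · intro x hx y hy; exact hy x hx
    · intro x hx x' hx'; exact tri u x x' hx hx'
    · intro y hy y' hy'
      exact tri v y y' (hy v hu.symm) (hy' v hu.symm)
  -- maximality
  have hmax : ∀ u, G.Adj v u → ∀ B', IsCompleteBipartiteSet G B' → Bs u ⊆ B' → B' = Bs u := by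
    intro u hu B' hB' hsub
    obtain ⟨X, Y, hXne, hYne, hdisj, hBeq, hcross, hXind, hYind⟩ := hB'
    have hvB' : v ∈ X ∪ Y := hBeq ▸ hsub (hvB u hu)
    have huB' : u ∈ X ∪ Y := hBeq ▸ hsub (Set.mem_union_right _ (huYp u))
    have key : ∀ X Y : Set V, B' = X ∪ Y →
        (∀ x ∈ X, ∀ y ∈ Y, G.Adj x y) →
        (∀ y ∈ Y, ∀ y' ∈ Y, ¬G.Adj y y') → u ∈ Y → B' = Bs u := by
      intro X Y hBeq hcross hYind huY'
      apply Set.Subset.antisymm _ hsub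
      intro z hz
      rw [hBeq] at hz
      cases hz with
      | inl hzX => exact Set.mem_union_left _ ((hcross z hzX u huY').symm)
      | inr hzY =>
        refine Set.mem_union_right _ ?_
        intro w hw
        have hwB' : w ∈ X ∪ Y := hBeq ▸ hsub (Set.mem_union_left _ hw)
        cases hwB' with
        | inl hwX => exact hcross w hwX z hzY
        | inr hwY => exact absurd hw (hYind u huY' w hwY)
    cases hvB' with
    | inl hvX =>
      have huY' : u ∈ Y := by
        cases huB' with
        | inl huX => exact absurd hu.symm (hXind u huX v hvX)
        | inr h => exact h
      exact key X Y hBeq hcross hYind huY'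
    | inr hvY =>
      have huX : u ∈ X := by
        cases huB' with
        | inl h => exact h
        | inr huY2 => exact absurd hu.symm (hYind u huY2 v hvY)
      exact key Y X (by rw [hBeq, Set.union_comm])
        (fun y hy x hx => (hcross x hx y hy).symm) hXind huX
  -- B(u) determines N(u)
  have hNeq : ∀ u, G.Adj v u → G.neighborSet u = {w ∈ Bs u | ¬ G.Adj v w} := by
    intro u hu
    ext w
    constructor
    · intro hw
      exact ⟨Set.mem_union_left _ hw, tri u v w hu.symm hw⟩
    · rintro ⟨hwB, hnadj⟩
      cases hwB with
      | inl h => exact h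
      | inr h => exact absurd (h v hu.symm) hnadj
  -- counting
  set S := {B : Set V | IsBiclique G B ∧ v ∈ B} with hS
  have hfin : S.Finite := Set.toFinite _
  have hmem : ∀ u ∈ G.neighborFinset v, Bs u ∈ hfin.toFinset := by
    intro u hu
    rw [SimpleGraph.mem_neighborFinset] at hu
    rw [Set.Finite.mem_toFinset]
    exact ⟨⟨hcbs u hu, hmax u hu⟩, hvB u hu⟩
  have hinj : Set.InjOn Bs ↑(G.neighborFinset v) := by
    intro u₁ h1 u₂ h2 heq
    rw [Finset.mem_coe, SimpleGraph.mem_neighborFinset] at h1 h2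
    apply htf
    rw [hNeq u₁ h1, hNeq u₂ h2, heq]
  have hcard := Finset.card_le_card_of_injOn Bs hmem hinj
  rw [← hdeg, Set.ncard_eq_toFinset_card S hfin]
  exact hcard
end

section
/- Let G be a {K₃, false-twin}-free graph and suppose there is a vertex v such that G − v has k maximal sets of false-twin vertices (each such set necessarily has exactly two vertices). Then G − v has at least k fewer bicliques than G. -/
/-- A maximal set of pairwise false-twin vertices of a graph. -/
def TwinClass {W : Type*} (H : SimpleGraph W) (S : Set W) : Prop :=
  S.Nonempty ∧ (∀ a ∈ S, ∀ b ∈ S, H.neighborSet a = H.neighborSet b) ∧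
    ∀ c : W, (∀ a ∈ S, H.neighborSet c = H.neighborSet a) → c ∈ S


namespace Scratch


lemma tri_free {V : Type*} {G : SimpleGraph V} (hK3 : G.CliqueFree 3) {x y z : V}
    (h1 : G.Adj x y) (h2 : G.Adj x z) (h3 : G.Adj y z) : False := by
  classical
  exact hK3 {x, y, z} (SimpleGraph.is3Clique_iff.mpr ⟨x, y, z, h1, h2, h3, rfl⟩)

/-- Any set between two complete bipartite sets is complete bipartite. -/
lemma cbs_between {V : Type*} {G : SimpleGraph V} {B C D : Set V}
    (hB : IsCompleteBipartiteSet G B) (hC : IsCompleteBipartiteSet G C)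
    (hBD : B ⊆ D) (hDC : D ⊆ C) : IsCompleteBipartiteSet G D := by
  obtain ⟨X, Y, _, _, hdisj, hCeq, hadj, hXind, hYind⟩ := hC
  obtain ⟨X₀, Y₀, ⟨x₀, hx₀⟩, ⟨y₀, hy₀⟩, _, hBeq, hadj₀, _, _⟩ := hB
  have hxy : G.Adj x₀ y₀ := hadj₀ x₀ hx₀ y₀ hy₀
  have hx₀D : x₀ ∈ D := hBD (hBeq ▸ Set.mem_union_left _ hx₀)
  have hy₀D : y₀ ∈ D := hBD (hBeq ▸ Set.mem_union_right _ hy₀)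
  have hx₀C : x₀ ∈ X ∪ Y := hCeq ▸ hDC hx₀D
  have hy₀C : y₀ ∈ X ∪ Y := hCeq ▸ hDC hy₀D
  have key : (x₀ ∈ X ∧ y₀ ∈ Y) ∨ (y₀ ∈ X ∧ x₀ ∈ Y) := by
    rcases hx₀C with hx | hx <;> rcases hy₀C with hy | hy
    · exact absurd hxy (hXind _ hx _ hy)
    · exact Or.inl ⟨hx, hy⟩
    · exact Or.inr ⟨hy, hx⟩
    · exact absurd hxy (hYind _ hx _ hy)
  have hDeq : D = (X ∩ D) ∪ (Y ∩ D) := by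
    ext u; constructor
    · intro hu
      rcases hCeq ▸ hDC hu with h | h
      · exact Or.inl ⟨h, hu⟩
      · exact Or.inr ⟨h, hu⟩
    · rintro (⟨_, hu⟩ | ⟨_, hu⟩) <;> exact hu
  refine ⟨X ∩ D, Y ∩ D, ?_, ?_, hdisj.mono Set.inter_subset_left Set.inter_subset_left,
    hDeq, ?_, ?_, ?_⟩
  · rcases key with ⟨h, _⟩ | ⟨h, _⟩
    exacts [⟨x₀, h, hx₀D⟩, ⟨y₀, h, hy₀D⟩]
  · rcases key with ⟨_, h⟩ | ⟨_, h⟩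
    exacts [⟨y₀, h, hy₀D⟩, ⟨x₀, h, hx₀D⟩]
  · exact fun x hx y hy => hadj x hx.1 y hy.1
  · exact fun x hx x' hx' => hXind x hx.1 x' hx'.1
  · exact fun y hy y' hy' => hYind y hy.1 y' hy'.1

variable {V : Type*} {G : SimpleGraph V} {v : V}

lemma lift_cbs {B : Set ({v}ᶜ : Set V)}
    (hB : IsCompleteBipartiteSet (G.induce ({v}ᶜ : Set V)) B) :
    IsCompleteBipartiteSet G (Subtype.val '' B) := by
  obtain ⟨X, Y, hX, hY, hdisj, hBeq, hadj, hXind, hYind⟩ := hB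
  refine ⟨Subtype.val '' X, Subtype.val '' Y, hX.image _, hY.image _,
    (Set.disjoint_image_iff Subtype.val_injective).mpr hdisj, by rw [hBeq, Set.image_union],
    ?_, ?_, ?_⟩
  · rintro x ⟨x', hx', rfl⟩ y ⟨y', hy', rfl⟩; exact hadj x' hx' y' hy'
  · rintro x ⟨x', hx', rfl⟩ y ⟨y', hy', rfl⟩; exact hXind x' hx' y' hy'
  · rintro x ⟨x', hx', rfl⟩ y ⟨y', hy', rfl⟩; exact hYind x' hx' y' hy'

lemma restrict_cbs {C : Set V} (hC : IsCompleteBipartiteSet G C) (hvC : C ⊆ {v}ᶜ) :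
    IsCompleteBipartiteSet (G.induce ({v}ᶜ : Set V)) (Subtype.val ⁻¹' C) := by
  obtain ⟨X, Y, ⟨x, hx⟩, ⟨y, hy⟩, hdisj, hCeq, hadj, hXind, hYind⟩ := hC
  have hXC : X ⊆ C := hCeq ▸ Set.subset_union_left
  have hYC : Y ⊆ C := hCeq ▸ Set.subset_union_right
  refine ⟨Subtype.val ⁻¹' X, Subtype.val ⁻¹' Y, ⟨⟨x, hvC (hXC hx)⟩, hx⟩,
    ⟨⟨y, hvC (hYC hy)⟩, hy⟩, hdisj.preimage _, by rw [hCeq, Set.preimage_union],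
    ?_, ?_, ?_⟩
  · exact fun a ha b hb => hadj _ ha _ hb
  · exact fun a ha b hb => hXind _ ha _ hb
  · exact fun a ha b hb => hYind _ ha _ hb




variable {V : Type*} {G : SimpleGraph V} {v : V}

lemma image_subset_compl (B : Set ({v}ᶜ : Set V)) : Subtype.val '' B ⊆ {v}ᶜ := by
  rintro _ ⟨b, _, rfl⟩; exact b.2

/-- A biclique of `G - v` extends (by possibly adding `v`) to a biclique of `G`. -/
lemma extend_biclique {B : Set ({v}ᶜ : Set V)}
    (hB : IsBiclique (G.induce ({v}ᶜ : Set V)) B) :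
    IsBiclique G (Subtype.val '' B) ∨
      (¬ IsBiclique G (Subtype.val '' B) ∧ IsBiclique G (Subtype.val '' B ∪ {v})) := by
  have hBc : IsCompleteBipartiteSet G (Subtype.val '' B) := lift_cbs hB.1
  by_cases hmax : IsBiclique G (Subtype.val '' B)
  · exact Or.inl hmax
  · right
    refine ⟨hmax, ?_⟩
    have key : ∀ C : Set V, IsCompleteBipartiteSet G C → Subtype.val '' B ⊆ C →
        C ⊆ Subtype.val '' B ∪ {v} := by
      intro C hC hsub u hu
      by_contra hun
      rw [Set.mem_union] at hun
      push_neg at hun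
      obtain ⟨huB, huv⟩ := hun
      have huv' : u ≠ v := fun h => huv (by simp [h])
      have h1 : IsCompleteBipartiteSet G (Subtype.val '' B ∪ {u}) :=
        cbs_between hBc hC Set.subset_union_left
          (Set.union_subset hsub (by simpa using hu))
      have h2 : (Subtype.val '' B ∪ {u}) ⊆ {v}ᶜ :=
        Set.union_subset (image_subset_compl B) (by simpa using huv'.symm)
      have h3 := restrict_cbs h1 h2
      have h4 : B ⊆ Subtype.val ⁻¹' (Subtype.val '' B ∪ {u}) := by
        intro b hb; exact Or.inl ⟨b, hb, rfl⟩
      have h5 := hB.2 _ h3 h4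
      have h6 : (⟨u, h2 (Or.inr rfl)⟩ : ({v}ᶜ : Set V)) ∈
          Subtype.val ⁻¹' (Subtype.val '' B ∪ {u}) := Or.inr rfl
      rw [h5] at h6
      exact huB ⟨_, h6, rfl⟩
    have hnm : ∃ C : Set V, IsCompleteBipartiteSet G C ∧ Subtype.val '' B ⊆ C ∧
        C ≠ Subtype.val '' B := by
      by_contra h
      push_neg at h
      exact hmax ⟨hBc, fun C hC hsub => h C hC hsub⟩
    obtain ⟨C, hC, hsub, hne⟩ := hnm
    have hCsub : C ⊆ Subtype.val '' B ∪ {v} := key C hC hsub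
    have hvC : v ∈ C := by
      by_contra hvC
      refine hne (Set.Subset.antisymm (fun u hu => ?_) hsub)
      rcases hCsub hu with h | h
      · exact h
      · exact absurd (Set.mem_singleton_iff.mp h ▸ hu) hvC
    have hCeq : C = Subtype.val '' B ∪ {v} :=
      Set.Subset.antisymm hCsub (Set.union_subset hsub (by simpa using hvC))
    rw [hCeq] at hC
    refine ⟨hC, fun C' hC' hsub' => ?_⟩
    exact Set.Subset.antisymm
      (key C' hC' (Set.subset_union_left.trans hsub'))
      hsub'




variable {V : Type*}

/-- The common neighborhood (inside `{v}ᶜ`) of a twin class. -/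
def NS (G : SimpleGraph V) (v : V) (S : Set ({v}ᶜ : Set V)) : Set V :=
  {w | w ≠ v ∧ ∀ a ∈ S, G.Adj (↑a : V) w}

/-- Vertices adjacent to `v` and to all of `NS`. -/
def DS (G : SimpleGraph V) (v : V) (S : Set ({v}ᶜ : Set V)) : Set V :=
  {u | G.Adj u v ∧ ∀ w ∈ NS G v S, G.Adj u w}

/-- The biclique of `G` associated to a twin class of `G - v`. -/
def gmap (G : SimpleGraph V) (v : V) (S : Set ({v}ᶜ : Set V)) : Set V :=
  DS G v S ∪ NS G v S ∪ {v}

variable {G : SimpleGraph V} {v : V}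

lemma nbhd_iff {a b : ({v}ᶜ : Set V)} :
    (G.induce ({v}ᶜ : Set V)).neighborSet a = (G.induce ({v}ᶜ : Set V)).neighborSet b ↔
      G.neighborSet ↑a \ {v} = G.neighborSet ↑b \ {v} := by
  constructor
  · intro h
    ext w
    simp only [Set.mem_diff, Set.mem_singleton_iff, SimpleGraph.mem_neighborSet]
    constructor
    · rintro ⟨haw, hwv⟩
      have hw : w ∈ ({v}ᶜ : Set V) := Set.mem_compl_singleton_iff.mpr hwv
      have h2 : (⟨w, hw⟩ : ({v}ᶜ : Set V)) ∈ (G.induce ({v}ᶜ : Set V)).neighborSet a :=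
        haw
      rw [h] at h2
      exact ⟨h2, hwv⟩
    · rintro ⟨hbw, hwv⟩
      have hw : w ∈ ({v}ᶜ : Set V) := Set.mem_compl_singleton_iff.mpr hwv
      have h2 : (⟨w, hw⟩ : ({v}ᶜ : Set V)) ∈ (G.induce ({v}ᶜ : Set V)).neighborSet b :=
        hbw
      rw [← h] at h2
      exact ⟨h2, hwv⟩
  · intro h
    ext w
    have hwv : (w : V) ≠ v := w.2
    constructor
    · intro haw
      have h1 : (w : V) ∈ G.neighborSet ↑a \ {v} := ⟨haw, hwv⟩
      rw [h] at h1
      exact h1.1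
    · intro hbw
      have h1 : (w : V) ∈ G.neighborSet ↑b \ {v} := ⟨hbw, hwv⟩
      rw [← h] at h1
      exact h1.1

lemma ns_eq {S : Set ({v}ᶜ : Set V)} (hS : TwinClass (G.induce ({v}ᶜ : Set V)) S)
    {b : ({v}ᶜ : Set V)} (hb : b ∈ S) :
    NS G v S = G.neighborSet ↑b \ {v} := by
  ext w
  constructor
  · rintro ⟨hwv, hall⟩
    exact ⟨hall b hb, hwv⟩
  · rintro ⟨hbw, hwv⟩
    refine ⟨hwv, fun c hc => ?_⟩
    have hnb := nbhd_iff.mp (hS.2.1 c hc b hb)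
    have : w ∈ G.neighborSet ↑c \ {v} := by rw [hnb]; exact ⟨hbw, hwv⟩
    exact this.1

lemma twin_eq {S S' : Set ({v}ᶜ : Set V)} (hS : TwinClass (G.induce ({v}ᶜ : Set V)) S)
    (hS' : TwinClass (G.induce ({v}ᶜ : Set V)) S') (h : NS G v S = NS G v S') : S = S' := by
  have sub : ∀ T T' : Set ({v}ᶜ : Set V), TwinClass (G.induce ({v}ᶜ : Set V)) T →
      TwinClass (G.induce ({v}ᶜ : Set V)) T' → NS G v T = NS G v T' → T' ⊆ T := by
    intro T T' hT hT' hN u hu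
    obtain ⟨c, hc⟩ := hT.1
    have h1 := ns_eq hT hc
    have h2 := ns_eq hT' hu
    have h3 : (G.induce ({v}ᶜ : Set V)).neighborSet u =
        (G.induce ({v}ᶜ : Set V)).neighborSet c :=
      nbhd_iff.mpr (by rw [← h2, ← hN, h1])
    exact hT.2.2 u (fun d hd => h3.trans (hT.2.1 c hc d hd))
  exact Set.Subset.antisymm (sub S' S hS' hS h.symm) (sub S S' hS hS' h)

lemma twin_pair [Finite V] (htf : FalseTwinFree G) {S : Set ({v}ᶜ : Set V)}
    (hS : TwinClass (G.induce ({v}ᶜ : Set V)) S) (h2 : 2 ≤ S.ncard) :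
    ∃ a b : ({v}ᶜ : Set V), G.Adj ↑a v ∧ ¬ G.Adj ↑b v ∧
      G.neighborSet ↑b = NS G v S ∧ G.neighborSet ↑a = NS G v S ∪ {v} := by
  have main : ∀ p q : ({v}ᶜ : Set V), p ∈ S → q ∈ S → v ∈ G.neighborSet ↑p →
      v ∉ G.neighborSet ↑q → ∃ a b : ({v}ᶜ : Set V), G.Adj ↑a v ∧ ¬ G.Adj ↑b v ∧
      G.neighborSet ↑b = NS G v S ∧ G.neighborSet ↑a = NS G v S ∪ {v} := by
    intro p q hp hq hvp hvq
    refine ⟨p, q, hvp, hvq, ?_, ?_⟩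
    · rw [ns_eq hS hq]
      ext w
      simp only [Set.mem_diff, Set.mem_singleton_iff]
      refine ⟨fun hw => ⟨hw, fun h => hvq (h ▸ hw)⟩, fun hw => hw.1⟩
    · have h1 : NS G v S = G.neighborSet ↑p \ {v} := ns_eq hS hp
      rw [h1]
      ext w
      simp only [Set.mem_union, Set.mem_diff, Set.mem_singleton_iff]
      constructor
      · intro hw
        by_cases hwv : w = v
        · exact Or.inr hwv
        · exact Or.inl ⟨hw, hwv⟩
      · rintro (⟨hw, _⟩ | rfl)
        · exact hw
        · exact hvp
  obtain ⟨x, y, hx, hy, hxy⟩ := (Set.one_lt_ncard_iff (Set.toFinite S)).mp h2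
  have hdiff := nbhd_iff.mp (hS.2.1 x hx y hy)
  have hne : G.neighborSet (↑x : V) ≠ G.neighborSet (↑y : V) := fun h =>
    hxy (Subtype.coe_injective (htf _ _ h))
  by_cases h1 : v ∈ G.neighborSet (↑x : V) <;> by_cases h2' : v ∈ G.neighborSet (↑y : V)
  · exfalso
    apply hne
    ext w
    by_cases hw : w = v
    · subst hw; simp [h1, h2']
    · have := Set.ext_iff.mp hdiff w
      simp only [Set.mem_diff, Set.mem_singleton_iff, hw, not_false_iff, and_true] at this
      exact this
  · exact main x y hx hy h1 h2'
  · exact main y x hy hx h2' h1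
  · exfalso
    apply hne
    ext w
    by_cases hw : w = v
    · subst hw; simp [h1, h2']
    · have := Set.ext_iff.mp hdiff w
      simp only [Set.mem_diff, Set.mem_singleton_iff, hw, not_false_iff, and_true] at this
      exact this


section Gmap

variable {S : Set ({v}ᶜ : Set V)} {a : ({v}ᶜ : Set V)}

lemma mem_DS_a (hav : G.Adj ↑a v) (hNa : G.neighborSet ↑a = NS G v S ∪ {v}) :
    (↑a : V) ∈ DS G v S :=
  ⟨hav, fun w hw => by
    have : w ∈ G.neighborSet (↑a : V) := by rw [hNa]; exact Or.inl hw
    exact this⟩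

lemma ns_not_adj_v (hK3 : G.CliqueFree 3) (hav : G.Adj ↑a v)
    (hNa : G.neighborSet ↑a = NS G v S ∪ {v}) :
    ∀ w ∈ NS G v S, ¬ G.Adj w v := by
  intro w hw hwv
  have haw : G.Adj ↑a w := by
    have : w ∈ G.neighborSet (↑a : V) := by rw [hNa]; exact Or.inl hw
    exact this
  exact tri_free hK3 haw hav hwv

lemma ns_indep (hK3 : G.CliqueFree 3) (hNa : G.neighborSet ↑a = NS G v S ∪ {v}) :
    ∀ w ∈ NS G v S, ∀ z ∈ NS G v S, ¬ G.Adj w z := by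
  intro w hw z hz hwz
  have haw : G.Adj ↑a w := by
    have : w ∈ G.neighborSet (↑a : V) := by rw [hNa]; exact Or.inl hw
    exact this
  have haz : G.Adj ↑a z := by
    have : z ∈ G.neighborSet (↑a : V) := by rw [hNa]; exact Or.inl hz
    exact this
  exact tri_free hK3 haw haz hwz

lemma ds_indep (hK3 : G.CliqueFree 3) :
    ∀ u ∈ DS G v S, ∀ u' ∈ DS G v S, ¬ G.Adj u u' := by
  intro u hu u' hu' huu
  exact tri_free hK3 huu hu.1 hu'.1

lemma ds_ns_disj (hK3 : G.CliqueFree 3) (hav : G.Adj ↑a v)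
    (hNa : G.neighborSet ↑a = NS G v S ∪ {v}) :
    Disjoint (DS G v S) (NS G v S ∪ {v}) := by
  rw [Set.disjoint_left]
  rintro u hu (h | rfl)
  · exact ns_not_adj_v hK3 hav hNa u h hu.1
  · exact G.irrefl hu.1

lemma gmap_biclique (hK3 : G.CliqueFree 3) (hav : G.Adj ↑a v)
    (hNa : G.neighborSet ↑a = NS G v S ∪ {v}) :
    IsBiclique G (gmap G v S) := by
  have aDS := mem_DS_a hav hNa
  constructor
  · refine ⟨DS G v S, NS G v S ∪ {v}, ⟨↑a, aDS⟩, ⟨v, Or.inr rfl⟩,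
      ds_ns_disj hK3 hav hNa, (Set.union_assoc _ _ _), ?_, ds_indep hK3, ?_⟩
    · rintro x hx y (hy | rfl)
      · exact hx.2 y hy
      · exact hx.1
    · rintro w (hw | rfl) z (hz | rfl)
      · exact ns_indep hK3 hNa w hw z hz
      · exact ns_not_adj_v hK3 hav hNa w hw
      · exact fun h => ns_not_adj_v hK3 hav hNa z hz h.symm
      · exact G.irrefl
  · intro C hC hsub
    obtain ⟨X, Y, _, _, _, hCeq, hadj, hXi, hYi⟩ := hC
    have aux : ∀ X Y : Set V, C = X ∪ Y → (∀ x ∈ X, ∀ y ∈ Y, G.Adj x y) →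
        (∀ x ∈ X, ∀ x' ∈ X, ¬ G.Adj x x') → (∀ y ∈ Y, ∀ y' ∈ Y, ¬ G.Adj y y') →
        v ∈ Y → C ⊆ gmap G v S := by
      intro X Y hCeq hadj hXi hYi hvY u hu
      have haC : (↑a : V) ∈ C := hsub (Or.inl (Or.inl aDS))
      have haX : (↑a : V) ∈ X := by
        rcases hCeq ▸ haC with h | h
        · exact h
        · exact absurd hav (hYi _ h v hvY)
      have hNSY : ∀ w ∈ NS G v S, w ∈ Y := by
        intro w hw
        have hwC : w ∈ C := hsub (Or.inl (Or.inr hw))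
        have haw : G.Adj ↑a w := by
          have : w ∈ G.neighborSet (↑a : V) := by rw [hNa]; exact Or.inl hw
          exact this
        rcases hCeq ▸ hwC with h | h
        · exact absurd haw (hXi _ haX _ h)
        · exact h
      rcases hCeq ▸ hu with h | h
      · exact Or.inl (Or.inl ⟨hadj u h v hvY, fun w hw => hadj u h w (hNSY w hw)⟩)
      · have hau : G.Adj ↑a u := hadj _ haX u h
        have : u ∈ NS G v S ∪ {v} := by rw [← hNa]; exact hau
        rcases this with h' | h'
        · exact Or.inl (Or.inr h')
        · exact Or.inr h'
    have hvC : v ∈ C := hsub (Or.inr rfl)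
    rcases hCeq ▸ hvC with hvX | hvY
    · exact Set.Subset.antisymm
        (aux Y X (by rw [hCeq, Set.union_comm])
          (fun y hy x hx => (hadj x hx y hy).symm) hYi hXi hvX) hsub
    · exact Set.Subset.antisymm (aux X Y hCeq hadj hXi hYi hvY) hsub

lemma ns_from_gmap (hK3 : G.CliqueFree 3) (hav : G.Adj ↑a v)
    (hNa : G.neighborSet ↑a = NS G v S ∪ {v}) :
    NS G v S ∪ {v} = {u ∈ gmap G v S | ¬ G.Adj v u} := by
  ext u
  constructor
  · rintro (hu | rfl)
    · exact ⟨Or.inl (Or.inr hu), fun h => ns_not_adj_v hK3 hav hNa u hu h.symm⟩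
    · exact ⟨Or.inr rfl, G.irrefl⟩
  · rintro ⟨hu, hnadj⟩
    rcases hu with (h | h) | h
    · exact absurd h.1.symm hnadj
    · exact Or.inl h
    · exact Or.inr h

end Gmap



section Strip

variable {S : Set ({v}ᶜ : Set V)} {a b : ({v}ᶜ : Set V)}

lemma gmap_strip_not_biclique (hK3 : G.CliqueFree 3) (hav : G.Adj ↑a v)
    (hNa : G.neighborSet ↑a = NS G v S ∪ {v}) (hbv : ¬ G.Adj ↑b v)
    (hNb : G.neighborSet ↑b = NS G v S) :
    ¬ IsBiclique (G.induce ({v}ᶜ : Set V)) (Subtype.val ⁻¹' (DS G v S ∪ NS G v S)) := by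
  intro hbic
  have aDS := mem_DS_a hav hNa
  by_cases hNS : (NS G v S).Nonempty
  · -- extend by b
    have hbDS : (↑b : V) ∉ DS G v S := fun h => hbv h.1
    have hbNS : (↑b : V) ∉ NS G v S := by
      intro h
      have : (↑b : V) ∈ G.neighborSet (↑b : V) := by rw [hNb]; exact h
      exact G.irrefl this
    have hbadjNS : ∀ w ∈ NS G v S, G.Adj ↑b w := by
      intro w hw
      have : w ∈ G.neighborSet (↑b : V) := by rw [hNb]; exact hw
      exact this
    have hbnadjDS : ∀ u ∈ DS G v S, ¬ G.Adj ↑b u := by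
      intro u hu h
      have : u ∈ G.neighborSet (↑b : V) := h
      rw [hNb] at this
      exact ns_not_adj_v hK3 hav hNa u this hu.1
    have hEcbs : IsCompleteBipartiteSet G (DS G v S ∪ NS G v S ∪ {(↑b : V)}) := by
      refine ⟨DS G v S ∪ {(↑b : V)}, NS G v S, ⟨↑a, Or.inl aDS⟩, hNS, ?_,
        by rw [Set.union_right_comm], ?_, ?_, ns_indep hK3 hNa⟩
      · rw [Set.disjoint_left]
        rintro u (hu | rfl) hu'
        · exact ns_not_adj_v hK3 hav hNa u hu' hu.1
        · exact hbNS hu'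
      · rintro x (hx | rfl) y hy
        · exact hx.2 y hy
        · exact hbadjNS y hy
      · rintro x (hx | rfl) x' (hx' | rfl)
        · exact ds_indep hK3 x hx x' hx'
        · exact fun h => hbnadjDS x hx h.symm
        · exact hbnadjDS x' hx'
        · exact G.irrefl
    have hEsub : DS G v S ∪ NS G v S ∪ {(↑b : V)} ⊆ ({v}ᶜ : Set V) := by
      rintro u ((hu | hu) | rfl)
      · exact Set.mem_compl_singleton_iff.mpr (G.ne_of_adj hu.1)
      · exact Set.mem_compl_singleton_iff.mpr hu.1
      · exact b.2
    have h3 := restrict_cbs hEcbs hEsub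
    have h4 : (Subtype.val ⁻¹' (DS G v S ∪ NS G v S) : Set ({v}ᶜ : Set V)) ⊆
        Subtype.val ⁻¹' (DS G v S ∪ NS G v S ∪ {(↑b : V)}) :=
      Set.preimage_mono Set.subset_union_left
    have h5 := hbic.2 _ h3 h4
    have h6 : b ∈ Subtype.val ⁻¹' (DS G v S ∪ NS G v S ∪ {(↑b : V)}) := Or.inr rfl
    rw [h5] at h6
    rcases h6 with h | h
    · exact hbDS h
    · exact hbNS h
  · -- NS empty : the set is independent, hence not a CBS
    rw [Set.not_nonempty_iff_eq_empty] at hNS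
    obtain ⟨X, Y, ⟨x, hx⟩, ⟨y, hy⟩, _, hEq, hadj, _, _⟩ := hbic.1
    have hxm : x ∈ Subtype.val ⁻¹' (DS G v S ∪ NS G v S) := hEq ▸ Set.mem_union_left _ hx
    have hym : y ∈ Subtype.val ⁻¹' (DS G v S ∪ NS G v S) := hEq ▸ Set.mem_union_right _ hy
    have hxy : G.Adj ↑x ↑y := hadj x hx y hy
    have hxDS : (↑x : V) ∈ DS G v S := by
      rcases hxm with h | h
      · exact h
      · rw [hNS] at h; exact absurd h (Set.notMem_empty _)
    have hyDS : (↑y : V) ∈ DS G v S := by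
      rcases hym with h | h
      · exact h
      · rw [hNS] at h; exact absurd h (Set.notMem_empty _)
    exact ds_indep hK3 _ hxDS _ hyDS hxy

end Strip


end Scratch

open Scratch in
/-- If G is {K₃, false-twin}-free and G − v has k nontrivial maximal false-twin
sets, then G − v has at least k fewer bicliques than G. -/
theorem remove_vertex_bicliques {V : Type*} [Fintype V] (G : SimpleGraph V)
    (hK3 : G.CliqueFree 3) (htf : FalseTwinFree G) (v : V) (k : ℕ)
    (hk : {S : Set ({v}ᶜ : Set V) |
        TwinClass (G.induce ({v}ᶜ : Set V)) S ∧ 2 ≤ S.ncard}.ncard = k) :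
    {B : Set ({v}ᶜ : Set V) | IsBiclique (G.induce ({v}ᶜ : Set V)) B}.ncard + k ≤
      {B : Set V | IsBiclique G B}.ncard := by
  classical
  let f : Set ({v}ᶜ : Set V) → Set V := fun B =>
    if IsBiclique G (Subtype.val '' B) then Subtype.val '' B else Subtype.val '' B ∪ {v}
  have hvim : ∀ B : Set ({v}ᶜ : Set V), v ∉ Subtype.val '' B := by
    rintro B ⟨b, _, hb⟩
    exact b.2 (by simp [hb])
  have f_strip : ∀ B : Set ({v}ᶜ : Set V), f B \ {v} = Subtype.val '' B := by
    intro B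
    by_cases h : IsBiclique G (Subtype.val '' B) <;>
      simp [f, h, Set.union_diff_distrib, Set.diff_singleton_eq_self (hvim B)]
  have f_bic : ∀ B : Set ({v}ᶜ : Set V), IsBiclique (G.induce ({v}ᶜ : Set V)) B →
      IsBiclique G (f B) := by
    intro B hB
    rcases extend_biclique hB with h | ⟨h1, h2⟩
    · simp only [f, if_pos h]; exact h
    · simpa [f, h1] using h2
  have f_inj : Set.InjOn f
      {B : Set ({v}ᶜ : Set V) | IsBiclique (G.induce ({v}ᶜ : Set V)) B} := by
    intro B hB B' hB' h
    have h2 : Subtype.val '' B = Subtype.val '' B' := by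
      rw [← f_strip B, ← f_strip B', h]
    exact Set.image_injective.mpr Subtype.val_injective h2
  -- twin class data
  have twin_data : ∀ S : Set ({v}ᶜ : Set V),
      TwinClass (G.induce ({v}ᶜ : Set V)) S ∧ 2 ≤ S.ncard →
      ∃ a b : ({v}ᶜ : Set V), G.Adj ↑a v ∧ ¬ G.Adj ↑b v ∧
        G.neighborSet ↑b = NS G v S ∧ G.neighborSet ↑a = NS G v S ∪ {v} :=
    fun S hS => twin_pair htf hS.1 hS.2
  have gstrip : ∀ S : Set ({v}ᶜ : Set V), gmap G v S \ {v} = DS G v S ∪ NS G v S := by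
    intro S
    have hv : v ∉ DS G v S ∪ NS G v S := by
      rintro (h | h)
      · exact G.irrefl h.1
      · exact h.1 rfl
    rw [gmap, Set.union_diff_distrib, Set.diff_singleton_eq_self hv]
    simp
  have g_inj : Set.InjOn (gmap G v)
      {S : Set ({v}ᶜ : Set V) | TwinClass (G.induce ({v}ᶜ : Set V)) S ∧ 2 ≤ S.ncard} := by
    intro S hS S' hS' h
    obtain ⟨a, b, hav, hbv, hNb, hNa⟩ := twin_data S hS
    obtain ⟨a', b', hav', hbv', hNb', hNa'⟩ := twin_data S' hS'
    have h1 : NS G v S ∪ {v} = NS G v S' ∪ {v} := by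
      rw [ns_from_gmap hK3 hav hNa, ns_from_gmap hK3 hav' hNa', h]
    have h2 : NS G v S = NS G v S' := by
      ext w
      constructor
      · intro hw
        rcases h1 ▸ (Set.mem_union_left _ hw) with h' | h'
        · exact h'
        · exact absurd h' hw.1
      · intro hw
        rcases h1.symm ▸ (Set.mem_union_left _ hw) with h' | h'
        · exact h'
        · exact absurd h' hw.1
    exact twin_eq hS.1 hS'.1 h2
  have disj : Disjoint
      (f '' {B : Set ({v}ᶜ : Set V) | IsBiclique (G.induce ({v}ᶜ : Set V)) B})
      (gmap G v ''
        {S : Set ({v}ᶜ : Set V) | TwinClass (G.induce ({v}ᶜ : Set V)) S ∧ 2 ≤ S.ncard}) := by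
    rw [Set.disjoint_left]
    rintro C ⟨B, hB, rfl⟩ ⟨S, hS, hg⟩
    obtain ⟨a, b, hav, hbv, hNb, hNa⟩ := twin_data S hS
    have h1 : Subtype.val '' B = DS G v S ∪ NS G v S := by
      rw [← f_strip B, ← hg, gstrip S]
    have h2 : B = Subtype.val ⁻¹' (DS G v S ∪ NS G v S) := by
      rw [← h1, Set.preimage_image_eq B Subtype.val_injective]
    exact gmap_strip_not_biclique hK3 hav hNa hbv hNb (h2 ▸ hB)
  have himg1 : f '' {B : Set ({v}ᶜ : Set V) | IsBiclique (G.induce ({v}ᶜ : Set V)) B} ⊆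
      {B : Set V | IsBiclique G B} := by
    rintro C ⟨B, hB, rfl⟩
    exact f_bic B hB
  have himg2 : gmap G v ''
      {S : Set ({v}ᶜ : Set V) | TwinClass (G.induce ({v}ᶜ : Set V)) S ∧ 2 ≤ S.ncard} ⊆
      {B : Set V | IsBiclique G B} := by
    rintro C ⟨S, hS, rfl⟩
    obtain ⟨a, b, hav, hbv, hNb, hNa⟩ := twin_data S hS
    exact gmap_biclique hK3 hav hNa
  calc {B : Set ({v}ᶜ : Set V) | IsBiclique (G.induce ({v}ᶜ : Set V)) B}.ncard + k
      = (f '' {B : Set ({v}ᶜ : Set V) | IsBiclique (G.induce ({v}ᶜ : Set V)) B}).ncard +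
        (gmap G v '' {S : Set ({v}ᶜ : Set V) |
          TwinClass (G.induce ({v}ᶜ : Set V)) S ∧ 2 ≤ S.ncard}).ncard := by
        rw [Set.ncard_image_of_injOn f_inj, Set.ncard_image_of_injOn g_inj, hk]
    _ = ((f '' {B : Set ({v}ᶜ : Set V) | IsBiclique (G.induce ({v}ᶜ : Set V)) B}) ∪
        (gmap G v '' {S : Set ({v}ᶜ : Set V) |
          TwinClass (G.induce ({v}ᶜ : Set V)) S ∧ 2 ≤ S.ncard})).ncard :=
        (Set.ncard_union_eq disj (Set.toFinite _) (Set.toFinite _)).symm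
    _ ≤ {B : Set V | IsBiclique G B}.ncard :=
        Set.ncard_le_ncard (Set.union_subset himg1 himg2) (Set.toFinite _)
end

section
/- Every connected bipartite false-twin-free graph on n ≥ 4 vertices has at least ⌈n/2⌉ bicliques. -/
/-!
Every vertex `v` with a neighbour spans the biclique `N(v) ∪ {u | N(v) ⊆ N(u)}`. In a graph
properly coloured with two colours, a vertex `u` of the same colour as `v` lies in this biclique
only if `N(v) ⊆ N(u)`; so two vertices of the same colour spanning the same biclique are false
twins. Hence `v ↦ (biclique of v, colour of v)` is injective, and `n ≤ 2 · #bicliques`.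
-/

section

variable {V : Type*} {G : SimpleGraph V}

namespace SimpleGraph

variable (G) in
def neighborBiclique (v : V) : Set V :=
  {u | G.neighborSet v ⊆ G.neighborSet u} ∪ G.neighborSet v

lemma self_mem_neighborBiclique (v : V) : v ∈ G.neighborBiclique v :=
  Or.inl fun _ => id

lemma Coloring.eq_of_adj_of_adj (C : G.Coloring (Fin 2)) {x y w : V}
    (hx : G.Adj x w) (hy : G.Adj y w) : C x = C y := by
  have := C.valid hx
  have := C.valid hy
  omega

lemma isCompleteBipartiteSet_neighborBiclique (C : G.Coloring (Fin 2)) {v : V}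
    (hv : (G.neighborSet v).Nonempty) : IsCompleteBipartiteSet G (G.neighborBiclique v) := by
  obtain ⟨w, hw⟩ := hv
  refine ⟨{u | G.neighborSet v ⊆ G.neighborSet u}, G.neighborSet v, ⟨v, fun _ => id⟩, ⟨w, hw⟩,
    ?_, rfl, fun x hx y hy => hx hy, ?_, ?_⟩
  · exact Set.disjoint_left.2 fun u hu hu' => G.irrefl (hu hu')
  · exact fun x hx x' hx' hxx' => C.valid hxx' (C.eq_of_adj_of_adj (hx hw) (hx' hw))
  · exact fun y hy y' hy' hyy' => C.valid hyy' (C.eq_of_adj_of_adj hy.symm hy'.symm)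

end SimpleGraph

lemma IsCompleteBipartiteSet.subset_neighborBiclique {B : Set V}
    (hB : IsCompleteBipartiteSet G B) {v : V} (hv : v ∈ B) (hN : G.neighborSet v ⊆ B) :
    B ⊆ G.neighborBiclique v := by
  obtain ⟨X, Y, -, -, -, rfl, hXY, hX, hY⟩ := hB
  rcases hv with hvX | hvY
  · have hNY : G.neighborSet v ⊆ Y := fun w hw =>
      (hN hw).resolve_left fun hwX => hX v hvX w hwX hw
    rintro z (hzX | hzY)
    · exact Or.inl fun w hw => hXY z hzX w (hNY hw)
    · exact Or.inr (hXY v hvX z hzY)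
  · have hNX : G.neighborSet v ⊆ X := fun w hw =>
      (hN hw).resolve_right fun hwY => hY v hvY w hwY hw
    rintro z (hzX | hzY)
    · exact Or.inr (hXY z hzX v hvY).symm
    · exact Or.inl fun w hw => (hXY w (hNX hw) z hzY).symm

namespace SimpleGraph

lemma isBiclique_neighborBiclique (C : G.Coloring (Fin 2)) {v : V}
    (hv : (G.neighborSet v).Nonempty) : IsBiclique G (G.neighborBiclique v) := by
  refine ⟨isCompleteBipartiteSet_neighborBiclique C hv, fun B hB hsub => ?_⟩
  exact (hB.subset_neighborBiclique (hsub (self_mem_neighborBiclique v))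
    fun _ hw => hsub (Or.inr hw)).antisymm hsub

lemma Coloring.neighborSet_subset_of_mem_neighborBiclique {α : Type*} (C : G.Coloring α)
    {u v : V} (hc : C u = C v) (hu : u ∈ G.neighborBiclique v) :
    G.neighborSet v ⊆ G.neighborSet u :=
  hu.resolve_right fun hvu => C.valid hvu hc.symm

end SimpleGraph

lemma FalseTwinFree.injective_neighborBiclique_prod {α : Type*} (htf : FalseTwinFree G)
    (C : G.Coloring α) : Function.Injective fun v => (G.neighborBiclique v, C v) := by
  intro u v huv
  obtain ⟨hB, hc⟩ := Prod.mk.inj huv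
  have hu : u ∈ G.neighborBiclique v := hB ▸ G.self_mem_neighborBiclique u
  have hv : v ∈ G.neighborBiclique u := hB ▸ G.self_mem_neighborBiclique v
  exact htf u v ((C.neighborSet_subset_of_mem_neighborBiclique hc.symm hv).antisymm
    (C.neighborSet_subset_of_mem_neighborBiclique hc hu))

end

lemma Nat.card_le_ncard_range_mul_of_injective_prod {α β γ : Type*} [Finite β] [Finite γ]
    {f : α → β} {g : α → γ} (hfg : Function.Injective fun a => (f a, g a)) :
    Nat.card α ≤ (Set.range f).ncard * Nat.card γ := by
  rw [← Set.ncard_univ γ, ← Set.ncard_prod, ← Set.ncard_range_of_injective hfg]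
  exact Set.ncard_le_ncard (Set.range_subset_iff.2 fun a => ⟨⟨a, rfl⟩, trivial⟩)

/-- Every connected bipartite false-twin-free graph on n ≥ 4 vertices has at least
⌈n/2⌉ bicliques. -/
theorem bicliques_lower_bound_bipartite {V : Type*} [Fintype V] (G : SimpleGraph V)
    (hconn : G.Connected) (hn : 4 ≤ Fintype.card V)
    (hbip : G.Colorable 2) (htf : FalseTwinFree G) :
    (Fintype.card V + 1) / 2 ≤ {B : Set V | IsBiclique G B}.ncard := by
  obtain ⟨C⟩ := hbip
  have : Nontrivial V := Fintype.one_lt_card_iff_nontrivial.1 (by omega)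
  have hcount : Fintype.card V ≤ (Set.range G.neighborBiclique).ncard * 2 := by
    simpa using Nat.card_le_ncard_range_mul_of_injective_prod
      (htf.injective_neighborBiclique_prod C)
  have hrange : Set.range G.neighborBiclique ⊆ {B : Set V | IsBiclique G B} := by
    rintro _ ⟨v, rfl⟩
    exact G.isBiclique_neighborBiclique C (hconn.preconnected.exists_adj_of_nontrivial v)
  have := Set.ncard_le_ncard hrange
  omega
end

section
/- Let G be a false-twin-free graph containing a triangle K₃ as a subgraph. Then no vertex of G belongs to all bicliques of G. -/
section

variable {V : Type*} {G : SimpleGraph V}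

theorem IsCompleteBipartiteSet.exists_adj_iff_xor_mem {B : Set V}
    (hB : IsCompleteBipartiteSet G B) :
    ∃ S : Set V, ∀ u ∈ B, ∀ w ∈ B, G.Adj u w ↔ Xor (u ∈ S) (w ∈ S) := by
  obtain ⟨X, Y, -, -, hXY, rfl, hadj, hX, hY⟩ := hB
  refine ⟨X, fun u hu w hw => ?_⟩
  have hYX : ∀ z ∈ Y, z ∉ X := fun z hz hzX => Set.disjoint_left.mp hXY hzX hz
  rcases hu with hu | hu <;> rcases hw with hw | hw
  · simpa [xor_iff_not_iff, hu, hw] using hX u hu w hw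
  · simpa [xor_iff_not_iff, hu, hYX w hw] using hadj u hu w hw
  · simpa [xor_iff_not_iff, hYX u hu, hw] using (hadj w hw u hu).symm
  · simpa [xor_iff_not_iff, hYX u hu, hYX w hw] using hY u hu w hw

theorem isCompleteBipartiteSet_pair {x y : V} (hxy : G.Adj x y) :
    IsCompleteBipartiteSet G {x, y} := by
  refine ⟨{x}, {y}, Set.singleton_nonempty x, Set.singleton_nonempty y,
    Set.disjoint_singleton.mpr hxy.ne, Set.singleton_union, ?_, ?_, ?_⟩ <;>
  · rintro _ rfl _ rfl
    first | exact hxy | exact G.irrefl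

theorem exists_isBiclique_superset [Finite V] {B : Set V} (hB : IsCompleteBipartiteSet G B) :
    ∃ B', IsBiclique G B' ∧ B ⊆ B' := by
  obtain ⟨A, ⟨hA, hBA⟩, hmax⟩ :=
    (Set.toFinite {B' : Set V | IsCompleteBipartiteSet G B' ∧ B ⊆ B'}).exists_maximalFor id _
      ⟨B, hB, subset_rfl⟩
  exact ⟨A, ⟨hA, fun B' hB' hAB' => (hmax ⟨hB', hBA.trans hAB'⟩ hAB').antisymm hAB'⟩, hBA⟩

theorem xor_adj_of_forall_isBiclique_mem [Finite V] {v : V}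
    (hv : ∀ B : Set V, IsBiclique G B → v ∈ B) {x y : V} (hxy : G.Adj x y) :
    Xor (G.Adj v x) (G.Adj v y) := by
  obtain ⟨B, hB, hxyB⟩ := exists_isBiclique_superset (isCompleteBipartiteSet_pair hxy)
  obtain ⟨S, hS⟩ := hB.1.exists_adj_iff_xor_mem
  have hx : x ∈ B := hxyB (Set.mem_insert x {y})
  have hy : y ∈ B := hxyB (Set.mem_insert_of_mem x rfl)
  have hxy' := (hS x hx y hy).mp hxy
  have hvx := hS v (hv B hB) x hx
  have hvy := hS v (hv B hB) y hy
  simp only [xor_iff_not_iff] at hxy' hvx hvy ⊢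
  tauto

end

theorem no_universal_vertex_of_triangle_general {V : Type*} [Fintype V] (G : SimpleGraph V)
    (htri : ∃ a b c : V, G.Adj a b ∧ G.Adj a c ∧ G.Adj b c) :
    ¬ ∃ v : V, ∀ B : Set V, IsBiclique G B → v ∈ B := by
  rintro ⟨v, hv⟩
  obtain ⟨a, b, c, hab, hac, hbc⟩ := htri
  have hab' := xor_adj_of_forall_isBiclique_mem hv hab
  have hac' := xor_adj_of_forall_isBiclique_mem hv hac
  have hbc' := xor_adj_of_forall_isBiclique_mem hv hbc
  simp only [xor_iff_not_iff] at hab' hac' hbc'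
  tauto

/-- In a false-twin-free graph containing a triangle, no vertex belongs to all
bicliques. -/
theorem no_universal_vertex_of_triangle {V : Type*} [Fintype V] (G : SimpleGraph V)
    (htf : FalseTwinFree G)
    (htri : ∃ a b c : V, G.Adj a b ∧ G.Adj a c ∧ G.Adj b c) :
    ¬ ∃ v : V, ∀ B : Set V, IsBiclique G B → v ∈ B :=
  no_universal_vertex_of_triangle_general G htri
end

section
/- Let G be a false-twin-free graph and let v be a vertex of degree at least 2. Then v belongs to at least two distinct bicliques of G. -/
section Bicliques

variable {V : Type*} {G : SimpleGraph V} {B : Set V} {a b c v w x y : V}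

namespace IsCompleteBipartiteSet

theorem exists_side (h : IsCompleteBipartiteSet G B) :
    ∃ X : Set V, ∀ x ∈ B, ∀ y ∈ B, G.Adj x y ↔ (x ∈ X ↔ y ∉ X) := by
  obtain ⟨X, Y, -, -, hXY, rfl, hadj, hX, hY⟩ := h
  refine ⟨X, fun x hx y hy => ?_⟩
  have hXY' := Set.disjoint_right.1 hXY
  rcases hx with hx | hx <;> rcases hy with hy | hy
  · simpa [hx, hy] using hX x hx y hy
  · simpa [hx, hXY' hy] using hadj x hx y hy
  · simpa [hy, hXY' hx] using (hadj y hy x hx).symm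
  · simpa [hXY' hx, hXY' hy] using hY x hx y hy

theorem adj_iff_adj_of_adj (h : IsCompleteBipartiteSet G B) (hv : v ∈ B) (ha : a ∈ B)
    (hb : b ∈ B) (hw : w ∈ B) (hva : G.Adj v a) (hvb : G.Adj v b) :
    G.Adj a w ↔ G.Adj b w := by
  obtain ⟨X, hX⟩ := h.exists_side
  rw [hX a ha w hw, hX b hb w hw]
  have := (hX v hv a ha).1 hva
  have := (hX v hv b hb).1 hvb
  tauto

theorem exists_isBiclique_superset [Finite V] (h : IsCompleteBipartiteSet G B) :
    ∃ C, IsBiclique G C ∧ B ⊆ C := by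
  obtain ⟨C, hBC, hC, hmax⟩ := Finite.exists_le_maximal h
  exact ⟨C, ⟨hC, fun C' hC' hCC' => (hmax hC' hCC').antisymm hCC'⟩, hBC⟩

end IsCompleteBipartiteSet

theorem IsStarSet.isCompleteBipartiteSet (h : IsStarSet G B) : IsCompleteBipartiteSet G B := by
  obtain ⟨c, hc, hne, hadj, hind⟩ := h
  refine ⟨{c}, B \ {c}, Set.singleton_nonempty c, hne, Set.disjoint_sdiff_right,
    (Set.union_sdiff_cancel (Set.singleton_subset_iff.2 hc)).symm, ?_, ?_, ?_⟩
  · rintro x rfl y ⟨hy, hyc⟩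
    exact hadj y hy hyc
  · rintro x rfl x' rfl
    exact G.irrefl
  · rintro y ⟨hy, hyc⟩ y' ⟨hy', hyc'⟩
    exact hind y hy y' hy' hyc hyc'

theorem isStarSet_insert_pair (hx : G.Adj c x) (hy : G.Adj c y) (hxy : ¬ G.Adj x y) :
    IsStarSet G {c, x, y} := by
  refine ⟨c, by simp, ⟨x, by simp [hx.ne']⟩, ?_, ?_⟩
  · rintro w (rfl | rfl | rfl) hwc
    exacts [(hwc rfl).elim, hx, hy]
  · rintro w (rfl | rfl | rfl) z (rfl | rfl | rfl) hwc hzc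
    all_goals first
      | exact (hwc rfl).elim | exact (hzc rfl).elim
      | exact G.irrefl | exact hxy | exact fun h => hxy h.symm

theorem exists_isBiclique_insert_pair_subset [Finite V] (hx : G.Adj c x) (hy : G.Adj c y)
    (hxy : ¬ G.Adj x y) : ∃ B, IsBiclique G B ∧ {c, x, y} ⊆ B :=
  (isStarSet_insert_pair hx hy hxy).isCompleteBipartiteSet.exists_isBiclique_superset

theorem exists_isBiclique_of_adj [Finite V] (hvx : G.Adj v x) :
    ∃ B, IsBiclique G B ∧ v ∈ B ∧ x ∈ B := by
  obtain ⟨B, hB, hsub⟩ := exists_isBiclique_insert_pair_subset hvx hvx G.irrefl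
  exact ⟨B, hB, hsub (by simp), hsub (by simp)⟩

theorem exists_isBiclique_of_adj_of_adj [Finite V] (hva : G.Adj v a) (haw : G.Adj a w) :
    ∃ B, IsBiclique G B ∧ v ∈ B ∧ w ∈ B := by
  by_cases hvw : G.Adj v w
  · exact exists_isBiclique_of_adj hvw
  · obtain ⟨B, hB, hsub⟩ := exists_isBiclique_insert_pair_subset hva.symm haw hvw
    exact ⟨B, hB, hsub (by simp), hsub (by simp)⟩

theorem FalseTwinFree.exists_adj_not_adj (htf : FalseTwinFree G) (hab : a ≠ b) :
    ∃ w, G.Adj a w ∧ ¬ G.Adj b w ∨ G.Adj b w ∧ ¬ G.Adj a w := by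
  by_contra! h
  exact hab (htf a b (Set.ext fun w => ⟨(h w).1, (h w).2⟩))

end Bicliques

/-- In a false-twin-free graph, a vertex of degree at least 2 belongs to at least
two distinct bicliques. -/
theorem two_bicliques_of_degree_two {V : Type*} [Fintype V] (G : SimpleGraph V)
    [DecidableRel G.Adj] (htf : FalseTwinFree G) (v : V) (hdeg : 2 ≤ G.degree v) :
    ∃ B₁ B₂ : Set V, B₁ ≠ B₂ ∧ IsBiclique G B₁ ∧ IsBiclique G B₂ ∧
      v ∈ B₁ ∧ v ∈ B₂ := by
  obtain ⟨a, ha, b, hb, hab⟩ := Finset.one_lt_card.1 (hdeg : 1 < (G.neighborFinset v).card)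
  rw [SimpleGraph.mem_neighborFinset] at ha hb
  by_cases hadj : G.Adj a b
  · obtain ⟨B₁, hB₁, hvB₁, haB₁⟩ := exists_isBiclique_of_adj ha
    obtain ⟨B₂, hB₂, hvB₂, hbB₂⟩ := exists_isBiclique_of_adj hb
    refine ⟨B₁, B₂, ?_, hB₁, hB₂, hvB₁, hvB₂⟩
    rintro rfl
    exact G.irrefl ((hB₁.1.adj_iff_adj_of_adj hvB₁ haB₁ hbB₂ haB₁ ha hb).2 hadj.symm)
  · obtain ⟨w, hw⟩ := htf.exists_adj_not_adj hab
    wlog haw : G.Adj a w ∧ ¬ G.Adj b w generalizing a b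
    · exact this b hb a ha hab.symm (fun h => hadj h.symm) hw.symm (hw.resolve_left haw)
    obtain ⟨B₁, hB₁, hsub⟩ := exists_isBiclique_insert_pair_subset ha hb hadj
    obtain ⟨B₂, hB₂, hvB₂, hwB₂⟩ := exists_isBiclique_of_adj_of_adj ha haw.1
    refine ⟨B₁, B₂, ?_, hB₁, hB₂, hsub (by simp), hvB₂⟩
    rintro rfl
    exact haw.2 ((hB₁.1.adj_iff_adj_of_adj (hsub (by simp)) (hsub (by simp)) (hsub (by simp))
      hwB₂ ha hb).1 haw.1)
end

section
/- For every k ≥ 1 there exists a false-twin-free graph on n = k + 2^k − 1 vertices with exactly k² bicliques. (Construction: take a clique K = {v₁,…,v_k} and an independent set with one vertex w_B for each nonempty subset B ⊆ K, where N(w_B) = B.) In particular, for n ≥ 75 such graphs have fewer than ⌈n/2⌉ bicliques. -/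
section General

variable {V W : Type*} {G : SimpleGraph V} {H : SimpleGraph W}

theorem setOf_maximal_eq_range {α ι : Type*} [PartialOrder α] {P : α → Prop} {f : ι → α}
    (hf : ∀ i, P (f i)) (hcover : ∀ x, P x → ∃ i, x ≤ f i)
    (hanti : ∀ i j, f i ≤ f j → f i = f j) :
    {x | Maximal P x} = Set.range f := by
  ext x
  constructor
  · intro hx
    obtain ⟨i, hi⟩ := hcover x hx.prop
    exact ⟨i, (hx.eq_of_le (hf i) hi).symm⟩
  · rintro ⟨i, rfl⟩
    refine ⟨hf i, fun y hy hle => ?_⟩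
    obtain ⟨j, hj⟩ := hcover y hy
    exact hj.trans (hanti i j (hle.trans hj)).ge

theorem isBiclique_iff_maximal {B : Set V} :
    IsBiclique G B ↔ Maximal (IsCompleteBipartiteSet G) B :=
  and_congr_right fun _ => forall₂_congr fun _ _ =>
    ⟨fun h hle => (h hle).le, fun h hle => (h hle).antisymm hle⟩

theorem falseTwinFree_iff_forall_adj_iff :
    FalseTwinFree G ↔ ∀ u v, (∀ w, G.Adj u w ↔ G.Adj v w) → u = v := by
  simp only [FalseTwinFree, Set.ext_iff, SimpleGraph.mem_neighborSet]

theorem FalseTwinFree.of_iso (h : FalseTwinFree G) (e : G ≃g H) : FalseTwinFree H := by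
  rw [falseTwinFree_iff_forall_adj_iff] at h ⊢
  intro u v huv
  refine e.symm.injective (h _ _ fun w => ?_)
  rw [← e.map_adj_iff, ← e.map_adj_iff (v := e.symm v)]
  simpa using huv (e w)

theorem IsCompleteBipartiteSet.image {B : Set V} (h : IsCompleteBipartiteSet G B) (e : G ↪g H) :
    IsCompleteBipartiteSet H (e '' B) := by
  obtain ⟨X, Y, hX, hY, hXY, rfl, hadj, hXi, hYi⟩ := h
  refine ⟨e '' X, e '' Y, hX.image e, hY.image e,
    (Set.disjoint_image_iff e.injective).2 hXY, Set.image_union e X Y, ?_, ?_, ?_⟩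
  · rintro _ ⟨x, hx, rfl⟩ _ ⟨y, hy, rfl⟩
    exact e.map_adj_iff.2 (hadj x hx y hy)
  · rintro _ ⟨x, hx, rfl⟩ _ ⟨x', hx', rfl⟩
    exact e.map_adj_iff.not.2 (hXi x hx x' hx')
  · rintro _ ⟨y, hy, rfl⟩ _ ⟨y', hy', rfl⟩
    exact e.map_adj_iff.not.2 (hYi y hy y' hy')

theorem isCompleteBipartiteSet_iff_exists_image (e : G ≃g H) {B : Set W} :
    IsCompleteBipartiteSet H B ↔ ∃ B₀, IsCompleteBipartiteSet G B₀ ∧ e '' B₀ = B := by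
  refine ⟨fun h => ⟨e.symm '' B, h.image e.symm.toEmbedding, ?_⟩, ?_⟩
  · exact e.toEquiv.image_symm_image B
  · rintro ⟨B₀, h, rfl⟩
    exact h.image e.toEmbedding

theorem SimpleGraph.Iso.ncard_setOf_isBiclique (e : G ≃g H) :
    {B | IsBiclique H B}.ncard = {B | IsBiclique G B}.ncard := by
  have himage : Set.image e '' {B | IsBiclique G B} = {B | IsBiclique H B} := by
    simp only [isBiclique_iff_maximal]
    rw [image_monotone_setOfPred_maximal fun _ _ _ _ => Set.image_subset_image_iff e.injective]
    simp only [← isCompleteBipartiteSet_iff_exists_image e]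
  rw [← himage, Set.ncard_image_of_injective _ (Set.image_injective.2 e.injective)]

end General

namespace PowersetSplitGraph

/-- `inl i` is the clique vertex `vᵢ`, `inr B` the independent vertex `w_B`. -/
abbrev Vertex (k : ℕ) := Fin k ⊕ {B : Finset (Fin k) // B.Nonempty}

variable {k : ℕ}

def graph (k : ℕ) : SimpleGraph (Vertex k) where
  Adj
    | .inl i, .inl j => i ≠ j
    | .inl i, .inr B => i ∈ B.1
    | .inr B, .inl i => i ∈ B.1
    | .inr _, .inr _ => False
  symm := ⟨by rintro (i | B) (j | C) h <;> simp_all [eq_comm]⟩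
  loopless := ⟨by rintro (i | B) h <;> simp_all⟩

@[simp] theorem adj_inl_inl {i j : Fin k} : (graph k).Adj (.inl i) (.inl j) ↔ i ≠ j := .rfl
@[simp] theorem adj_inl_inr {i : Fin k} {B} : (graph k).Adj (.inl i) (.inr B) ↔ i ∈ B.1 := .rfl
@[simp] theorem adj_inr_inl {i : Fin k} {B} : (graph k).Adj (.inr B) (.inl i) ↔ i ∈ B.1 := .rfl
@[simp] theorem not_adj_inr_inr {B C} : ¬ (graph k).Adj (.inr B) (.inr C) := id

def single (i : Fin k) : {B : Finset (Fin k) // B.Nonempty} :=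
  ⟨{i}, Finset.singleton_nonempty i⟩

theorem card_vertex (k : ℕ) : Fintype.card (Vertex k) = k + 2 ^ k - 1 := by
  have : Fintype.card {B : Finset (Fin k) // B.Nonempty} = 2 ^ k - 1 := by
    simp [Finset.nonempty_iff_ne_empty, Fintype.card_subtype_compl]
  rw [Fintype.card_sum, Fintype.card_fin, this]
  have := Nat.one_le_two_pow (n := k)
  omega

theorem falseTwinFree : FalseTwinFree (graph k) := by
  rw [falseTwinFree_iff_forall_adj_iff]
  rintro (i | B) (j | C) h
  · simpa [single, eq_comm] using (h (.inr (single i))).1 (by simp [single])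
  · simpa [single] using (h (.inr (single i))).1 (by simp [single])
  · simpa [single] using (h (.inr (single j))).2 (by simp [single])
  · exact congrArg Sum.inr (Subtype.ext (Finset.ext fun i => h (.inl i)))

/-- For `i ≠ j` this is `{vᵢ, vⱼ} ∪ {w_B : i ∈ B, j ∉ B}`, for `i = j` the star
`{vᵢ} ∪ {w_B : i ∈ B}`. -/
def bicliqueOf (i j : Fin k) : Set (Vertex k) :=
  {v | match v with
    | .inl l => l = i ∨ l = j
    | .inr B => i ∈ B.1 ∧ (j ∈ B.1 → j = i)}

@[simp] theorem mem_bicliqueOf_inl {i j l : Fin k} :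
    Sum.inl l ∈ bicliqueOf i j ↔ l = i ∨ l = j := .rfl

@[simp] theorem mem_bicliqueOf_inr {i j : Fin k} {B} :
    Sum.inr B ∈ bicliqueOf i j ↔ i ∈ B.1 ∧ (j ∈ B.1 → j = i) := .rfl

theorem isCompleteBipartiteSet_bicliqueOf (i j : Fin k) :
    IsCompleteBipartiteSet (graph k) (bicliqueOf i j) := by
  refine ⟨{.inl i}, bicliqueOf i j \ {.inl i}, Set.singleton_nonempty _,
    ⟨.inr (single i), by simp [single]⟩, Set.disjoint_sdiff_right, ?_, ?_, ?_, ?_⟩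
  · rw [Set.union_sdiff_self, Set.union_eq_self_of_subset_left (by simp)]
  · rintro _ rfl (l | B) ⟨hv, hne⟩ <;> simp_all [eq_comm]
  · rintro _ rfl _ rfl
    exact (graph k).irrefl
  · rintro (l | B) ⟨hv, hne⟩ (l' | B') ⟨hv', hne'⟩ <;> simp_all

theorem eq_of_bicliqueOf_subset {i j i' j' : Fin k} (h : bicliqueOf i j ⊆ bicliqueOf i' j') :
    i = i' ∧ j = j' := by
  have hi : i' = i := by simpa [single] using (h (show .inr (single i) ∈ _ by simp [single])).1
  subst hi
  have hj : j = i' ∨ j = j' := h (show .inl j ∈ _ by simp)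
  refine ⟨rfl, ?_⟩
  rcases hj with rfl | rfl
  · have := h (show .inr ⟨{j, j'}, Finset.insert_nonempty _ _⟩ ∈ _ by simp)
    simp_all
  · rfl

section Classification

variable {X Y : Set (Vertex k)} (hXY : ∀ x ∈ X, ∀ y ∈ Y, (graph k).Adj x y)
  (hX : ∀ x ∈ X, ∀ x' ∈ X, ¬ (graph k).Adj x x')
  (hY : ∀ y ∈ Y, ∀ y' ∈ Y, ¬ (graph k).Adj y y')
include hXY hX hY

theorem exists_subset_bicliqueOf_of_inr_mem {i : Fin k} {C} (hi : .inl i ∈ X)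
    (hC : .inr C ∈ Y) : ∃ j, X ∪ Y ⊆ bicliqueOf i j := by
  by_cases hj : ∃ j, .inl j ∈ Y
  · obtain ⟨j, hj⟩ := hj
    refine ⟨j, ?_⟩
    rintro (l | B) (hl | hl)
    · exact .inl (by simpa using hX _ hl _ hi)
    · exact .inr (by simpa using hY _ hl _ hj)
    · exact absurd (hXY _ hl _ hC) (by simp)
    · exact ⟨by simpa using hXY _ hi _ hl, fun h => absurd h (by simpa using hY _ hj _ hl)⟩
  · push Not at hj
    refine ⟨i, ?_⟩
    rintro (l | B) (hl | hl)
    · exact .inl (by simpa using hX _ hl _ hi)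
    · exact absurd hl (hj l)
    · exact absurd (hXY _ hl _ hC) (by simp)
    · simpa using hXY _ hi _ hl

theorem subset_bicliqueOf_of_forall_inr_notMem {i j : Fin k} (hi : .inl i ∈ X) (hj : .inl j ∈ Y)
    (hYC : ∀ C, .inr C ∉ Y) : X ∪ Y ⊆ bicliqueOf j i := by
  rintro (l | B) (hl | hl)
  · exact .inr (by simpa using hX _ hl _ hi)
  · exact .inl (by simpa using hY _ hl _ hj)
  · exact ⟨by simpa using hXY _ hl _ hj, fun h => absurd h (by simpa using hX _ hl _ hi)⟩
  · exact absurd hl (hYC B)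

theorem exists_subset_bicliqueOf_of_inl_mem {i : Fin k} (hi : .inl i ∈ X) (hYne : Y.Nonempty) :
    ∃ a b, X ∪ Y ⊆ bicliqueOf a b := by
  by_cases hC : ∃ C, .inr C ∈ Y
  · obtain ⟨C, hC⟩ := hC
    exact ⟨i, exists_subset_bicliqueOf_of_inr_mem hXY hX hY hi hC⟩
  · push Not at hC
    obtain ⟨j | C, hj⟩ := hYne
    · exact ⟨j, i, subset_bicliqueOf_of_forall_inr_notMem hXY hX hY hi hj hC⟩
    · exact absurd hj (hC C)

end Classification

theorem exists_subset_bicliqueOf {S : Set (Vertex k)}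
    (h : IsCompleteBipartiteSet (graph k) S) : ∃ i j, S ⊆ bicliqueOf i j := by
  obtain ⟨X, Y, ⟨x, hx⟩, ⟨y, hy⟩, -, rfl, hXY, hX, hY⟩ := h
  rcases x with i | B
  · exact exists_subset_bicliqueOf_of_inl_mem hXY hX hY hx ⟨y, hy⟩
  · obtain ⟨j, rfl⟩ : ∃ j, y = .inl j := by
      rcases y with j | C
      · exact ⟨j, rfl⟩
      · exact absurd (hXY _ hx _ hy) (by simp)
    rw [Set.union_comm]
    exact exists_subset_bicliqueOf_of_inl_mem (fun y hy x hx => (hXY x hx y hy).symm) hY hX hy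
      ⟨_, hx⟩

theorem setOf_isBiclique :
    {S | IsBiclique (graph k) S} = Set.range fun p : Fin k × Fin k => bicliqueOf p.1 p.2 := by
  simp only [isBiclique_iff_maximal]
  refine setOf_maximal_eq_range (fun p => isCompleteBipartiteSet_bicliqueOf p.1 p.2)
    (fun S hS => ?_) fun p q h => ?_
  · obtain ⟨i, j, h⟩ := exists_subset_bicliqueOf hS
    exact ⟨(i, j), h⟩
  · obtain ⟨hi, hj⟩ := eq_of_bicliqueOf_subset h
    rw [hi, hj]

theorem ncard_setOf_isBiclique : {S | IsBiclique (graph k) S}.ncard = k ^ 2 := by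
  rw [setOf_isBiclique, ← Nat.card_coe_set_eq, Nat.card_range_of_injective,
    Nat.card_eq_fintype_card]
  · simp [sq]
  · intro p q h
    obtain ⟨hi, hj⟩ := eq_of_bicliqueOf_subset h.le
    exact Prod.ext hi hj

end PowersetSplitGraph

theorem two_mul_sq_add_two_le_two_pow {k : ℕ} (hk : 7 ≤ k) : 2 * k ^ 2 + 2 ≤ 2 ^ k := by
  induction k, hk using Nat.le_induction with
  | base => norm_num
  | succ k hk ih =>
    rw [pow_succ 2 k]
    nlinarith

theorem sq_lt_half_of_seventy_five_le {k : ℕ} (h : 75 ≤ k + 2 ^ k - 1) :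
    k ^ 2 < (k + 2 ^ k - 1 + 1) / 2 := by
  have hk : 7 ≤ k := by
    by_contra! hk
    have : 2 ^ k ≤ 2 ^ 6 := Nat.pow_le_pow_right two_pos (by omega)
    omega
  have := two_mul_sq_add_two_le_two_pow hk
  omega

open PowersetSplitGraph in
theorem exists_twin_free_graph_few_bicliques_general (k : ℕ) :
    ∃ G : SimpleGraph (Fin (k + 2 ^ k - 1)), FalseTwinFree G ∧
      {B : Set (Fin (k + 2 ^ k - 1)) | IsBiclique G B}.ncard = k ^ 2 ∧
      (75 ≤ k + 2 ^ k - 1 → k ^ 2 < (k + 2 ^ k - 1 + 1) / 2) := by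
  let e : Vertex k ≃ Fin (k + 2 ^ k - 1) := Fintype.equivFinOfCardEq (card_vertex k)
  let iso := SimpleGraph.Iso.map e (graph k)
  exact ⟨(graph k).map e.toEmbedding, falseTwinFree.of_iso iso,
    iso.ncard_setOf_isBiclique.trans ncard_setOf_isBiclique, sq_lt_half_of_seventy_five_le⟩

/-- For every k ≥ 1 there is a false-twin-free graph on n = k + 2^k − 1 vertices
with exactly k² bicliques; for n ≥ 75 this is fewer than ⌈n/2⌉. -/
theorem exists_twin_free_graph_few_bicliques (k : ℕ) (hk : 1 ≤ k) :
    ∃ G : SimpleGraph (Fin (k + 2 ^ k - 1)), FalseTwinFree G ∧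
      {B : Set (Fin (k + 2 ^ k - 1)) | IsBiclique G B}.ncard = k ^ 2 ∧
      (75 ≤ k + 2 ^ k - 1 → k ^ 2 < (k + 2 ^ k - 1 + 1) / 2) :=
  exists_twin_free_graph_few_bicliques_general k
end

section
/- Let G be a graph and let Z₁,…,Z_k be the equivalence classes of the relation 'having equal open neighborhoods' (false-twin classes). Then the graph Tw(G), obtained by keeping exactly one representative vertex from each class, is false-twin-free, and G and Tw(G) have the same number of bicliques. -/
namespace TwinAux

variable {V : Type*} {G : SimpleGraph V}

lemma adj_transfer {u u' w w' : V} (hu : G.neighborSet u = G.neighborSet u')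
    (hw : G.neighborSet w = G.neighborSet w') (h : G.Adj u w) : G.Adj u' w' := by
  have h1 : w ∈ G.neighborSet u' := hu ▸ (h : w ∈ G.neighborSet u)
  have h2 : u' ∈ G.neighborSet w' := hw ▸ (((h1 : G.Adj u' w).symm) : u' ∈ G.neighborSet w)
  exact (h2 : G.Adj w' u').symm

/-- The twin closure of a set. -/
def tcl (G : SimpleGraph V) (S : Set V) : Set V :=
  {u | ∃ v ∈ S, G.neighborSet u = G.neighborSet v}

lemma subset_tcl {S : Set V} : S ⊆ tcl G S := fun v hv => ⟨v, hv, rfl⟩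

lemma tcl_union {S T : Set V} : tcl G (S ∪ T) = tcl G S ∪ tcl G T := by
  ext u
  constructor
  · rintro ⟨v, hv | hv, h⟩
    · exact Or.inl ⟨v, hv, h⟩
    · exact Or.inr ⟨v, hv, h⟩
  · rintro (⟨v, hv, h⟩ | ⟨v, hv, h⟩)
    · exact ⟨v, Or.inl hv, h⟩
    · exact ⟨v, Or.inr hv, h⟩

lemma tcl_cbs {C : Set V} (h : IsCompleteBipartiteSet G C) :
    IsCompleteBipartiteSet G (tcl G C) := by
  obtain ⟨X, Y, hX, hY, hdisj, hC, hXY, hXX, hYY⟩ := h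
  refine ⟨tcl G X, tcl G Y, hX.mono subset_tcl, hY.mono subset_tcl, ?_, by rw [hC, tcl_union],
    ?_, ?_, ?_⟩
  · rw [Set.disjoint_left]
    rintro u ⟨x, hx, hux⟩ ⟨y, hy, huy⟩
    have hxy := hXY x hx y hy
    have : G.Adj y y := adj_transfer (hux.symm.trans huy) rfl hxy
    exact G.irrefl this
  · rintro u ⟨x, hx, hux⟩ w ⟨y, hy, hwy⟩
    exact adj_transfer hux.symm hwy.symm (hXY x hx y hy)
  · rintro u ⟨x, hx, hux⟩ u' ⟨x', hx', hux'⟩ hadj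
    exact hXX x hx x' hx' (adj_transfer hux hux' hadj)
  · rintro u ⟨y, hy, huy⟩ u' ⟨y', hy', huy'⟩ hadj
    exact hYY y hy y' hy' (adj_transfer huy huy' hadj)

lemma biclique_tcl {C : Set V} (h : IsBiclique G C) : tcl G C = C :=
  h.2 _ (tcl_cbs h.1) subset_tcl

/-- Restricting a twin-closed complete bipartite set to the representatives. -/
lemma restrict_cbs {R : Set V} (rep : V → V) (hrepR : ∀ v, rep v ∈ R)
    (hrepN : ∀ v, G.neighborSet (rep v) = G.neighborSet v)
    {D : Set V} (hD : IsCompleteBipartiteSet G D)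
    (hcl : ∀ v ∈ D, rep v ∈ D) :
    IsCompleteBipartiteSet (G.induce R) (Subtype.val ⁻¹' D) := by
  obtain ⟨X, Y, hX, hY, hdisj, hDXY, hXY, hXX, hYY⟩ := hD
  have key : ∀ x ∈ X, rep x ∈ X := by
    intro x hx
    have hmem : rep x ∈ X ∪ Y := hDXY ▸ hcl x (hDXY ▸ Set.mem_union_left Y hx)
    rcases hmem with h | h
    · exact h
    · exfalso
      have hadj : G.Adj x (rep x) := hXY x hx (rep x) h
      have : G.Adj (rep x) (rep x) := adj_transfer (hrepN x).symm rfl hadj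
      exact G.irrefl this
  have key' : ∀ y ∈ Y, rep y ∈ Y := by
    intro y hy
    have hmem : rep y ∈ X ∪ Y := hDXY ▸ hcl y (hDXY ▸ Set.mem_union_right X hy)
    rcases hmem with h | h
    · exfalso
      have hadj : G.Adj (rep y) y := hXY (rep y) h y hy
      have : G.Adj (rep y) (rep y) := adj_transfer rfl (hrepN y).symm hadj
      exact G.irrefl this
    · exact h
  refine ⟨Subtype.val ⁻¹' X, Subtype.val ⁻¹' Y, ?_, ?_, ?_, ?_, ?_, ?_, ?_⟩
  · obtain ⟨x, hx⟩ := hX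
    exact ⟨⟨rep x, hrepR x⟩, key x hx⟩
  · obtain ⟨y, hy⟩ := hY
    exact ⟨⟨rep y, hrepR y⟩, key' y hy⟩
  · exact Set.disjoint_left.2 fun r hr hr' => Set.disjoint_left.1 hdisj hr hr'
  · rw [hDXY]; rfl
  · intro a ha b hb
    exact hXY _ ha _ hb
  · intro a ha b hb hadj
    exact hXX _ ha _ hb hadj
  · intro a ha b hb hadj
    exact hYY _ ha _ hb hadj

/-- Extending a complete bipartite set of the induced graph to all of `G`. -/
lemma extend_cbs {R : Set V} (rep : V → V) (hrepR : ∀ v, rep v ∈ R)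
    (hrepN : ∀ v, G.neighborSet (rep v) = G.neighborSet v)
    (hfix : ∀ r ∈ R, rep r = r)
    {B : Set R} (hB : IsCompleteBipartiteSet (G.induce R) B) :
    IsCompleteBipartiteSet G {v : V | (⟨rep v, hrepR v⟩ : R) ∈ B} := by
  obtain ⟨X, Y, hX, hY, hdisj, hBXY, hXY, hXX, hYY⟩ := hB
  have hfix' : ∀ r : R, (⟨rep (r : V), hrepR _⟩ : R) = r := fun r =>
    Subtype.ext (hfix (r : V) r.2)
  refine ⟨{v : V | (⟨rep v, hrepR v⟩ : R) ∈ X}, {v : V | (⟨rep v, hrepR v⟩ : R) ∈ Y},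
    ?_, ?_, ?_, ?_, ?_, ?_, ?_⟩
  · obtain ⟨x, hx⟩ := hX
    exact ⟨(x : V), by simp only [Set.mem_setOf_eq, hfix' x]; exact hx⟩
  · obtain ⟨y, hy⟩ := hY
    exact ⟨(y : V), by simp only [Set.mem_setOf_eq, hfix' y]; exact hy⟩
  · rw [Set.disjoint_left]
    intro v hv hv'
    exact Set.disjoint_left.1 hdisj hv hv'
  · ext v
    simp only [Set.mem_setOf_eq, Set.mem_union, hBXY, Set.mem_union]
  · intro v hv w hw
    have hadj : G.Adj (rep v) (rep w) := hXY _ hv _ hw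
    exact adj_transfer (hrepN v) (hrepN w) hadj
  · intro v hv w hw hadj
    have h2 : G.Adj (rep v) (rep w) := adj_transfer (hrepN v).symm (hrepN w).symm hadj
    exact hXX _ hv _ hw h2
  · intro v hv w hw hadj
    have h2 : G.Adj (rep v) (rep w) := adj_transfer (hrepN v).symm (hrepN w).symm hadj
    exact hYY _ hv _ hw h2

end TwinAux



open TwinAux in
/-- Taking one representative per false-twin class yields a false-twin-free graph
with the same number of bicliques. -/
theorem twin_quotient_bicliques {V : Type*} [Fintype V] (G : SimpleGraph V)
    (R : Set V)
    (hR : ∀ v : V, ∃! r : V, r ∈ R ∧ G.neighborSet r = G.neighborSet v) :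
    FalseTwinFree (G.induce R) ∧
    {B : Set R | IsBiclique (G.induce R) B}.ncard =
      {B : Set V | IsBiclique G B}.ncard := by
  classical
  obtain ⟨rep, hrep⟩ : ∃ rep : V → V, ∀ v, rep v ∈ R ∧ G.neighborSet (rep v) = G.neighborSet v :=
    ⟨fun v => (hR v).exists.choose, fun v => (hR v).exists.choose_spec⟩
  have hrepR : ∀ v, rep v ∈ R := fun v => (hrep v).1
  have hrepN : ∀ v, G.neighborSet (rep v) = G.neighborSet v := fun v => (hrep v).2
  have hru : ∀ v r, r ∈ R → G.neighborSet r = G.neighborSet v → r = rep v :=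
    fun v r hr hN => (hR v).unique ⟨hr, hN⟩ ⟨hrepR v, hrepN v⟩
  have hfix : ∀ r ∈ R, rep r = r := fun r hr => (hru r r hr rfl).symm
  have step : ∀ a b : R, (G.induce R).neighborSet a = (G.induce R).neighborSet b →
      ∀ w, G.Adj (a : V) w → G.Adj (b : V) w := by
    intro a b hab w hw
    have h1 : G.Adj (a : V) (rep w) := adj_transfer rfl (hrepN w).symm hw
    have h2 : (⟨rep w, hrepR w⟩ : R) ∈ (G.induce R).neighborSet a := h1
    rw [hab] at h2
    have h3 : G.Adj (b : V) (rep w) := h2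
    exact adj_transfer rfl (hrepN w) h3
  have hftf : FalseTwinFree (G.induce R) := by
    intro u v huv
    have key : G.neighborSet (u : V) = G.neighborSet (v : V) := by
      ext w
      exact ⟨fun h => step u v huv w h, fun h => step v u huv.symm w h⟩
    exact Subtype.ext ((hru (u : V) (v : V) v.2 key.symm).trans (hfix (u : V) u.2)).symm
  refine ⟨hftf, ?_⟩
  set ψ : Set R → Set V := fun B => {v : V | (⟨rep v, hrepR v⟩ : R) ∈ B} with hψ
  have hmemψ : ∀ (B : Set R) (r : R), (r : V) ∈ ψ B ↔ r ∈ B := by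
    intro B r
    have h : (⟨rep (r : V), hrepR _⟩ : R) = r := Subtype.ext (hfix _ r.2)
    simp only [hψ, Set.mem_setOf_eq, h]
  have hφψ : ∀ B : Set R, Subtype.val ⁻¹' (ψ B) = B := by
    intro B; ext r; exact hmemψ B r
  have hinj : Function.Injective ψ := fun B B' h => by
    rw [← hφψ B, ← hφψ B', h]
  have hclosed : ∀ C : Set V, tcl G C = C → ∀ v ∈ C, rep v ∈ C := by
    intro C hC v hv
    rw [← hC]; exact ⟨v, hv, hrepN v⟩
  have hψφ : ∀ C : Set V, tcl G C = C → ψ (Subtype.val ⁻¹' C) = C := by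
    intro C hC
    ext v
    simp only [hψ, Set.mem_setOf_eq, Set.mem_preimage]
    constructor
    · intro h
      rw [← hC]; exact ⟨rep v, h, (hrepN v).symm⟩
    · intro h
      exact hclosed C hC v h
  have hforward : ∀ B : Set R, IsBiclique (G.induce R) B → IsBiclique G (ψ B) := by
    intro B hB
    refine ⟨extend_cbs rep hrepR hrepN hfix hB.1, ?_⟩
    intro C hC hsub
    have hDcbs : IsCompleteBipartiteSet G (tcl G C) := tcl_cbs hC
    have hDcl : ∀ v ∈ tcl G C, rep v ∈ tcl G C := by
      rintro v ⟨x, hx, hvx⟩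
      exact ⟨x, hx, (hrepN v).trans hvx⟩
    have hφD : IsCompleteBipartiteSet (G.induce R) (Subtype.val ⁻¹' tcl G C) :=
      restrict_cbs rep hrepR hrepN hDcbs hDcl
    have hBsub : B ⊆ Subtype.val ⁻¹' tcl G C := by
      intro r hr
      exact subset_tcl (hsub ((hmemψ B r).2 hr))
    have hBeq := hB.2 _ hφD hBsub
    apply Set.Subset.antisymm _ hsub
    intro v hv
    have h1 : rep v ∈ tcl G C := hDcl v (subset_tcl hv)
    have h2 : (⟨rep v, hrepR v⟩ : R) ∈ Subtype.val ⁻¹' tcl G C := h1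
    rw [hBeq] at h2
    exact h2
  have hbackward : ∀ C : Set V, IsBiclique G C →
      ∃ B : Set R, IsBiclique (G.induce R) B ∧ ψ B = C := by
    intro C hC
    have htcl : tcl G C = C := biclique_tcl hC
    have hcl := hclosed C htcl
    refine ⟨Subtype.val ⁻¹' C, ⟨restrict_cbs rep hrepR hrepN hC.1 hcl, ?_⟩, hψφ C htcl⟩
    intro B' hB' hsub
    have hext : IsCompleteBipartiteSet G (ψ B') := extend_cbs rep hrepR hrepN hfix hB'
    have hCsub : C ⊆ ψ B' := by
      intro v hv
      have h : (⟨rep v, hrepR v⟩ : R) ∈ Subtype.val ⁻¹' C := hcl v hv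
      exact hsub h
    have hCeq := hC.2 _ hext hCsub
    rw [← hφψ B', hCeq]
  have hsetEq : {B : Set V | IsBiclique G B} = ψ '' {B : Set R | IsBiclique (G.induce R) B} := by
    ext C
    constructor
    · intro hC
      obtain ⟨B, hB, hBC⟩ := hbackward C hC
      exact ⟨B, hB, hBC⟩
    · rintro ⟨B, hB, rfl⟩
      exact hforward B hB
  rw [hsetEq, Set.ncard_image_of_injOn hinj.injOn]
end
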